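/- arXiv:2405.10722 — 6 statements merged into one kernel-verified Lean document; each statement's English description precedes it below -/
import Mathlib

section
/- For every natural number n, the eigenvalue of the single-layer boundary integral operator on the unit sphere, λ_n(G)(k) = i·k·h_n(k)·j_n(k), converges to 1/(2n+1) as k → 0⁺. -/
open Real Complex Filter Topology

/-- The Rayleigh operator `f ↦ (x⁻¹ d/dx) f`. -/
noncomputable def sphStep (f : ℝ → ℝ) : ℝ → ℝ := fun x => deriv f x / x

/-- Spherical Bessel function of the first kind:
`j_n(x) = (−x)^n (x⁻¹ d/dx)^n (sin x / x)`. -/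
noncomputable def sphj (n : ℕ) (x : ℝ) : ℝ :=
  (-x) ^ n * (sphStep^[n] (fun t => Real.sin t / t)) x

/-- Spherical Bessel function of the second kind:
`y_n(x) = −(−x)^n (x⁻¹ d/dx)^n (cos x / x)`. -/
noncomputable def sphy (n : ℕ) (x : ℝ) : ℝ :=
  -((-x) ^ n * (sphStep^[n] (fun t => Real.cos t / t)) x)

/-- Spherical Hankel function of the first kind: `h_n = j_n + i y_n`. -/
noncomputable def sphh (n : ℕ) (x : ℝ) : ℂ :=
  (sphj n x : ℂ) + Complex.I * (sphy n x : ℂ)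

/-- Derivative `j_n′`. -/
noncomputable def sphj' (n : ℕ) (x : ℝ) : ℝ := deriv (sphj n) x

/-- Derivative `y_n′`. -/
noncomputable def sphy' (n : ℕ) (x : ℝ) : ℝ := deriv (sphy n) x

/-- Derivative `h_n′`. -/
noncomputable def sphh' (n : ℕ) (x : ℝ) : ℂ := deriv (sphh n) x

open intervalIntegral MeasureTheory
noncomputable def Fb (n : ℕ) (x : ℝ) : ℝ := ∫ t in (0:ℝ)..1, Real.cos (x*t) * (1-t^2)^n

lemma Fb_cont (n : ℕ) : Continuous (Fb n) := by
  exact intervalIntegral.continuous_parametric_intervalIntegral_of_continuous'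
    (f := fun x t => Real.cos (x*t) * (1-t^2)^n) (by fun_prop) 0 1

lemma Fb_hasDeriv (n : ℕ) (x : ℝ) :
    HasDerivAt (Fb n) (∫ t in (0:ℝ)..1, -Real.sin (x*t) * t * (1-t^2)^n) x := by
  have H := intervalIntegral.hasDerivAt_integral_of_dominated_loc_of_deriv_le
    (F := fun y t => Real.cos (y*t) * (1-t^2)^n)
    (F' := fun y t => -Real.sin (y*t) * t * (1-t^2)^n)
    (bound := fun _ => 1) (μ := MeasureTheory.volume) (a := 0) (b := 1) (x₀ := x)
    (s := Metric.ball x 1) (Metric.ball_mem_nhds x one_pos) ?_ ?_ ?_ ?_ ?_ ?_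
  · exact H.2
  · exact Filter.Eventually.of_forall fun y => (by fun_prop : Continuous fun t => Real.cos (y*t) * (1-t^2)^n).aestronglyMeasurable
  · exact ((by fun_prop : Continuous fun t => Real.cos (x*t) * (1-t^2)^n)).intervalIntegrable 0 1
  · exact (by fun_prop : Continuous fun t => -Real.sin (x*t) * t * (1-t^2)^n).aestronglyMeasurable
  · refine Filter.Eventually.of_forall fun t ht y _ => ?_
    rw [Set.uIoc_of_le (by norm_num : (0:ℝ) ≤ 1)] at ht
    have h1 : |t| ≤ 1 := by rw [_root_.abs_of_pos ht.1]; exact ht.2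
    have h2 : |1 - t^2| ≤ 1 := by
      rw [_root_.abs_of_nonneg (by nlinarith [ht.1.le, ht.2] : (0:ℝ) ≤ 1 - t^2)]
      nlinarith [ht.1.le]
    calc ‖-Real.sin (y*t) * t * (1-t^2)^n‖
        = |Real.sin (y*t)| * |t| * |1-t^2|^n := by
          rw [norm_mul, norm_mul, norm_neg, Real.norm_eq_abs, Real.norm_eq_abs, Real.norm_eq_abs, _root_.abs_pow]
      _ ≤ 1 * 1 * 1^n := by
          gcongr <;> first
            | exact Real.abs_sin_le_one _
            | exact h1
            | exact h2
            | positivity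
      _ = 1 := by norm_num
  · exact intervalIntegrable_const
  · refine Filter.Eventually.of_forall fun t _ y _ => ?_
    have h1 : HasDerivAt (fun y : ℝ => y * t) t y := hasDerivAt_mul_const t
    have h2 : HasDerivAt (fun y : ℝ => Real.cos (y*t)) (-Real.sin (y*t) * t) y :=
      by simpa [Function.comp_def] using (Real.hasDerivAt_cos (y*t)).comp y h1
    simpa [mul_comm] using h2.mul_const ((1-t^2)^n)

lemma Fb_parts (n : ℕ) (x : ℝ) :
    ∫ t in (0:ℝ)..1, -Real.sin (x*t) * t * (1-t^2)^n
      = -(x/(2*n+2)) * Fb (n+1) x := by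
  have c2 : (2*(n:ℝ)+2) ≠ 0 := by positivity
  set G : ℝ → ℝ := fun t => Real.sin (x*t) * (1-t^2)^(n+1) / (2*(n:ℝ)+2) with hG
  have hd : ∀ t : ℝ, HasDerivAt G
      ((Real.cos (x*t) * x * (1-t^2)^(n+1)
        + Real.sin (x*t) * ((((n:ℝ))+1) * (1-t^2)^n * (-2*t))) / (2*(n:ℝ)+2)) t := by
    intro t
    have h1 : HasDerivAt (fun t : ℝ => x*t) x t := by
      simpa using (hasDerivAt_id t).const_mul x
    have h2 : HasDerivAt (fun t : ℝ => Real.sin (x*t)) (Real.cos (x*t) * x) t :=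
      (Real.hasDerivAt_sin (x*t)).comp t h1
    have h3 : HasDerivAt (fun t : ℝ => (1-t^2)^(n+1))
        ((((n:ℝ))+1) * (1-t^2)^n * (-2*t)) t := by
      have hin : HasDerivAt (fun t : ℝ => 1-t^2) (-2*t) t := by
        simpa [mul_comm] using ((hasDerivAt_pow 2 t).const_sub 1)
      have := (hasDerivAt_pow (n+1) ((1:ℝ)-t^2)).comp t hin
      simpa [Function.comp_def, mul_comm, mul_assoc, mul_left_comm] using this
    simpa [hG] using (h2.mul h3).div_const (2*(n:ℝ)+2)
  have split : ∀ t ∈ Set.uIcc (0:ℝ) 1, -Real.sin (x*t) * t * (1-t^2)^n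
      = ((Real.cos (x*t) * x * (1-t^2)^(n+1)
          + Real.sin (x*t) * ((((n:ℝ))+1) * (1-t^2)^n * (-2*t))) / (2*(n:ℝ)+2))
        - (x/(2*(n:ℝ)+2)) * (Real.cos (x*t) * (1-t^2)^(n+1)) := by
    intro t _
    field_simp
    ring
  rw [intervalIntegral.integral_congr split, intervalIntegral.integral_sub, intervalIntegral.integral_const_mul]
  · have h0 : (∫ t in (0:ℝ)..1, ((Real.cos (x*t) * x * (1-t^2)^(n+1)
          + Real.sin (x*t) * ((((n:ℝ))+1) * (1-t^2)^n * (-2*t))) / (2*(n:ℝ)+2))) = G 1 - G 0 :=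
      intervalIntegral.integral_eq_sub_of_hasDerivAt (fun t _ => hd t)
        ((by fun_prop (disch := exact c2) : Continuous fun t : ℝ => ((Real.cos (x*t) * x * (1-t^2)^(n+1)
          + Real.sin (x*t) * ((((n:ℝ))+1) * (1-t^2)^n * (-2*t))) / (2*(n:ℝ)+2))).intervalIntegrable 0 1)
    rw [h0]
    simp [hG, Fb]
  · exact ((by fun_prop (disch := exact c2) : Continuous fun t : ℝ => ((Real.cos (x*t) * x * (1-t^2)^(n+1)
          + Real.sin (x*t) * ((((n:ℝ))+1) * (1-t^2)^n * (-2*t))) / (2*(n:ℝ)+2)))).intervalIntegrable 0 1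
  · exact ((by fun_prop : Continuous fun t : ℝ => (x/(2*(n:ℝ)+2)) * (Real.cos (x*t) * (1-t^2)^(n+1)))).intervalIntegrable 0 1

lemma Fb_base (x : ℝ) (hx : x ≠ 0) : Real.sin x / x = Fb 0 x := by
  have hd : ∀ t : ℝ, HasDerivAt (fun t : ℝ => Real.sin (x*t) / x) (Real.cos (x*t) * (1-t^2)^0) t := by
    intro t
    have h1 : HasDerivAt (fun t : ℝ => x*t) x t := by
      simpa using (hasDerivAt_id t).const_mul x
    have h2 := ((Real.hasDerivAt_sin (x*t)).comp t h1).div_const x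
    simpa [mul_comm, hx] using h2
  have h0 : Fb 0 x = Real.sin (x*1)/x - Real.sin (x*0)/x :=
    intervalIntegral.integral_eq_sub_of_hasDerivAt (fun t _ => hd t)
      ((by fun_prop : Continuous fun t : ℝ => Real.cos (x*t) * (1-t^2)^0).intervalIntegrable 0 1)
  rw [h0]; simp

lemma sphStep_sin (n : ℕ) : ∀ x : ℝ, x ≠ 0 →
    (sphStep^[n] (fun t => Real.sin t / t)) x
      = (-1)^n / (2^n * (n.factorial : ℝ)) * Fb n x := by
  induction n with
  | zero => intro x hx; simpa using Fb_base x hx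
  | succ n ih =>
    intro x hx
    rw [Function.iterate_succ_apply']
    have hev : sphStep^[n] (fun t => Real.sin t / t)
        =ᶠ[𝓝 x] fun y => (-1)^n / (2^n * (n.factorial : ℝ)) * Fb n y := by
      filter_upwards [isOpen_ne.mem_nhds hx] with y hy using ih y hy
    have hfac : ((n.factorial : ℝ)) ≠ 0 := Nat.cast_ne_zero.mpr n.factorial_ne_zero
    have hder : deriv (sphStep^[n] (fun t => Real.sin t / t)) x
        = (-1)^n / (2^n * (n.factorial : ℝ)) * (-(x/(2*(n:ℝ)+2)) * Fb (n+1) x) := by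
      rw [hev.deriv_eq, deriv_const_mul _ (Fb_hasDeriv n x).differentiableAt,
        (Fb_hasDeriv n x).deriv, Fb_parts n x]
    show deriv (sphStep^[n] (fun t => Real.sin t / t)) x / x = _
    rw [hder, Nat.factorial_succ]
    push_cast
    have h2 : (2*(n:ℝ)+2) ≠ 0 := by positivity
    field_simp
    ring

noncomputable def Dn : ℕ → ℝ
  | 0 => 1
  | (n+1) => (2*n+1) * Dn n

lemma sphStep_cos (n : ℕ) : ∃ a b : Polynomial ℝ,
    a.eval 0 = (-1)^n * Dn n ∧ ∀ x : ℝ, x ≠ 0 →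
      (sphStep^[n] (fun t => Real.cos t / t)) x
        = (a.eval x * Real.cos x + b.eval x * Real.sin x) / x^(2*n+1) := by
  induction n with
  | zero => exact ⟨1, 0, by simp [Dn], fun x hx => by simp [pow_one]⟩
  | succ n ih =>
    obtain ⟨a, b, ha0, hab⟩ := ih
    refine ⟨Polynomial.X * (a.derivative + b) - Polynomial.C ((2*(n:ℝ)+1)) * a,
            Polynomial.X * (b.derivative - a) - Polynomial.C ((2*(n:ℝ)+1)) * b, ?_, ?_⟩
    · simp [Dn, ha0]; push_cast; ring
    · intro x hx
      rw [Function.iterate_succ_apply']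
      have hev : sphStep^[n] (fun t => Real.cos t / t)
          =ᶠ[𝓝 x] fun y => (a.eval y * Real.cos y + b.eval y * Real.sin y) / y^(2*n+1) := by
        filter_upwards [isOpen_ne.mem_nhds hx] with y hy using hab y hy
      have hnum : HasDerivAt (fun y => a.eval y * Real.cos y + b.eval y * Real.sin y)
          (a.derivative.eval x * Real.cos x + a.eval x * (-Real.sin x)
            + (b.derivative.eval x * Real.sin x + b.eval x * Real.cos x)) x :=
        ((a.hasDerivAt x).mul (Real.hasDerivAt_cos x)).add
          ((b.hasDerivAt x).mul (Real.hasDerivAt_sin x))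
      have hden : HasDerivAt (fun y : ℝ => y^(2*n+1)) (((2*n+1 : ℕ) : ℝ) * x^(2*n)) x := by
        simpa using hasDerivAt_pow (2*n+1) x
      have hxpow : x^(2*n+1) ≠ 0 := pow_ne_zero _ hx
      have hq := hnum.div hden hxpow
      show deriv (sphStep^[n] (fun t => Real.cos t / t)) x / x = _
      rw [hev.deriv_eq, show (fun y => (a.eval y * Real.cos y + b.eval y * Real.sin y) / y^(2*n+1)) = (fun y => a.eval y * Real.cos y + b.eval y * Real.sin y) / (fun y : ℝ => y^(2*n+1)) from rfl, hq.deriv]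
      simp only [Polynomial.eval_mul, Polynomial.eval_add, Polynomial.eval_sub,
        Polynomial.eval_X, Polynomial.eval_C]
      have hx2 : x^(2*n) ≠ 0 := pow_ne_zero _ hx
      field_simp
      push_cast
      ring

lemma Fb_zero_rec (n : ℕ) : (2*(n:ℝ)+3) * Fb (n+1) 0 = (2*(n:ℝ)+2) * Fb n 0 := by
  have hd : ∀ t : ℝ, HasDerivAt (fun t : ℝ => t*(1-t^2)^(n+1))
      (1*(1-t^2)^(n+1) + t*((((n:ℝ))+1) * (1-t^2)^n * (-2*t))) t := by
    intro t
    have hin : HasDerivAt (fun t : ℝ => 1-t^2) (-2*t) t := by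
      simpa [mul_comm] using ((hasDerivAt_pow 2 t).const_sub 1)
    have h3 : HasDerivAt (fun t : ℝ => (1-t^2)^(n+1))
        ((((n:ℝ))+1) * (1-t^2)^n * (-2*t)) t := by
      have := (hasDerivAt_pow (n+1) ((1:ℝ)-t^2)).comp t hin
      simpa [Function.comp_def, mul_comm, mul_assoc, mul_left_comm] using this
    exact (hasDerivAt_id t).mul h3
  have h0 : (∫ t in (0:ℝ)..1, (1*(1-t^2)^(n+1) + t*((((n:ℝ))+1) * (1-t^2)^n * (-2*t))))
      = 1*(1-1^2)^(n+1) - 0*(1-0^2)^(n+1) :=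
    intervalIntegral.integral_eq_sub_of_hasDerivAt (fun t _ => hd t)
      ((by fun_prop : Continuous fun t : ℝ =>
        1*(1-t^2)^(n+1) + t*((((n:ℝ))+1) * (1-t^2)^n * (-2*t))).intervalIntegrable 0 1)
  have hsplit : ∀ t ∈ Set.uIcc (0:ℝ) 1,
      1*(1-t^2)^(n+1) + t*((((n:ℝ))+1) * (1-t^2)^n * (-2*t))
        = (2*(n:ℝ)+3) * (Real.cos (0*t) * (1-t^2)^(n+1)) - (2*(n:ℝ)+2) * (Real.cos (0*t) * (1-t^2)^n) := by
    intro t _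
    simp only [zero_mul, Real.cos_zero, one_mul]
    ring
  rw [intervalIntegral.integral_congr hsplit] at h0
  rw [intervalIntegral.integral_sub, intervalIntegral.integral_const_mul,
    intervalIntegral.integral_const_mul] at h0
  · have : (2*(n:ℝ)+3) * Fb (n+1) 0 - (2*(n:ℝ)+2) * Fb n 0 = 0 := by
      rw [Fb, Fb]; rw [h0]; norm_num
    linarith
  · exact ((by fun_prop : Continuous fun t : ℝ => (2*(n:ℝ)+3) * (Real.cos (0*t) * (1-t^2)^(n+1)))).intervalIntegrable 0 1
  · exact ((by fun_prop : Continuous fun t : ℝ => (2*(n:ℝ)+2) * (Real.cos (0*t) * (1-t^2)^n))).intervalIntegrable 0 1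

lemma Fb_zero_base : Fb 0 0 = 1 := by
  rw [Fb]
  simp

lemma key_value (n : ℕ) : Dn n * Fb n 0 / (2^n * (n.factorial : ℝ)) = 1/(2*(n:ℝ)+1) := by
  induction n with
  | zero => simp [Dn, Fb_zero_base]
  | succ n ih =>
    have hfac : ((n.factorial : ℝ)) ≠ 0 := Nat.cast_ne_zero.mpr n.factorial_ne_zero
    have h2 : (2:ℝ)^n ≠ 0 := by positivity
    have h3 : (2*(n:ℝ)+1) ≠ 0 := by positivity
    have h4 : (2*(n:ℝ)+3) ≠ 0 := by positivity
    have ih' : Dn n * Fb n 0 * (2*(n:ℝ)+1) = 2^n * (n.factorial : ℝ) := by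
      field_simp at ih
      linarith [ih]
    have hrec := Fb_zero_rec n
    have hD : Dn (n+1) = (2*(n:ℝ)+1) * Dn n := rfl
    rw [hD, Nat.factorial_succ]
    push_cast
    rw [div_eq_div_iff (by positivity) (by positivity)]
    have hF : Fb (n+1) 0 = (2*(n:ℝ)+2) * Fb n 0 / (2*(n:ℝ)+3) := by
      field_simp
      linarith [hrec]
    rw [hF]
    field_simp
    linear_combination (2*(2*(n:ℝ)+3)) * ih'

/-- λ_n(G)(k) = i·k·h_n(k)·j_n(k) → 1/(2n+1) as k → 0⁺. -/
theorem singleLayer_eigenvalue_limit (n : ℕ) :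
    Filter.Tendsto (fun k : ℝ => Complex.I * (k : ℂ) * sphh n k * (sphj n k : ℂ))
      (𝓝[>] (0 : ℝ)) (𝓝 (1 / (2 * (n : ℂ) + 1))) := by
  obtain ⟨a, b, ha0, hab⟩ := sphStep_cos n
  set c : ℝ := (-1)^n / (2^n * (n.factorial : ℝ)) with hc
  set u : ℝ → ℝ := sphStep^[n] (fun t => Real.sin t / t) with hu
  set Num : ℝ → ℝ := fun k => a.eval k * Real.cos k + b.eval k * Real.sin k with hNum
  have hsign : ((-1:ℝ))^n * (-1)^n = 1 := by
    rw [← pow_add]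
    exact Even.neg_one_pow ⟨n, rfl⟩
  have hsign2 : ((-1:ℝ))^(n*2) = 1 := by
    rw [pow_mul', neg_one_sq, one_pow]
  -- limits of building blocks
  have htu : Filter.Tendsto u (𝓝[>] (0:ℝ)) (𝓝 (c * Fb n 0)) := by
    have h1 : Filter.Tendsto (fun k => c * Fb n k) (𝓝[>] (0:ℝ)) (𝓝 (c * Fb n 0)) :=
      (((Fb_cont n).tendsto 0).const_mul c).mono_left nhdsWithin_le_nhds
    refine h1.congr' ?_
    filter_upwards [self_mem_nhdsWithin] with k hk
    exact (sphStep_sin n k (ne_of_gt hk)).symm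
  have htN : Filter.Tendsto Num (𝓝[>] (0:ℝ)) (𝓝 ((-1)^n * Dn n)) := by
    have h1 : Continuous Num := by fun_prop
    have := (h1.tendsto 0).mono_left (nhdsWithin_le_nhds (s := Set.Ioi (0:ℝ)))
    simpa [hNum, ha0] using this
  -- p and q
  have hp : Filter.Tendsto (fun k : ℝ => k * (sphj n k)^2) (𝓝[>] (0:ℝ)) (𝓝 0) := by
    have h1 : Filter.Tendsto (fun k : ℝ => k^(2*n+1) * (u k)^2) (𝓝[>] (0:ℝ))
        (𝓝 (0 * (c * Fb n 0)^2)) := by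
      refine Filter.Tendsto.mul ?_ (htu.pow 2)
      have : Filter.Tendsto (fun k : ℝ => k^(2*n+1)) (𝓝 (0:ℝ)) (𝓝 ((0:ℝ)^(2*n+1))) :=
        (continuous_pow (2*n+1)).tendsto 0
      simpa using this.mono_left nhdsWithin_le_nhds
    rw [zero_mul] at h1
    refine h1.congr' ?_
    filter_upwards [self_mem_nhdsWithin] with k hk
    have hpow : k^(2*n+1) = k^n * k^n * k := by
      rw [pow_succ, two_mul, pow_add]
    rw [sphj, neg_pow]
    ring_nf
    rw [hsign2, mul_one]
    simp only [hu, div_eq_mul_inv]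
  have hq : Filter.Tendsto (fun k : ℝ => -(k * sphy n k * sphj n k)) (𝓝[>] (0:ℝ))
      (𝓝 (Dn n * Fb n 0 / (2^n * (n.factorial : ℝ)))) := by
    have h1 : Filter.Tendsto (fun k : ℝ => Num k * u k) (𝓝[>] (0:ℝ))
        (𝓝 (((-1)^n * Dn n) * (c * Fb n 0))) := htN.mul htu
    have heq : ((-1:ℝ))^n * Dn n * (c * Fb n 0) = Dn n * Fb n 0 / (2^n * (n.factorial : ℝ)) := by
      rw [hc]
      field_simp
      linear_combination (Dn n * Fb n 0) * hsign
    rw [heq] at h1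
    refine h1.congr' ?_
    filter_upwards [self_mem_nhdsWithin] with k hk
    have hk0 : k ≠ 0 := ne_of_gt hk
    have hpow : k^(2*n+1) = k^n * k^n * k := by
      rw [pow_succ, two_mul, pow_add]
    rw [sphy, sphj, hab k hk0, neg_pow]
    field_simp
    ring_nf
    rw [hsign2]
    ring
    simp only [hu, hNum, div_eq_mul_inv]
    ring
  rw [key_value n] at hq
  have hfp : Filter.Tendsto (fun k : ℝ => Complex.I * ((k * (sphj n k)^2 : ℝ) : ℂ))
      (𝓝[>] (0:ℝ)) (𝓝 (Complex.I * (((0:ℝ)) : ℂ))) :=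
    ((Complex.continuous_ofReal.tendsto 0).comp hp).const_mul Complex.I
  have hfq : Filter.Tendsto (fun k : ℝ => ((-(k * sphy n k * sphj n k) : ℝ) : ℂ))
      (𝓝[>] (0:ℝ)) (𝓝 ((1/(2*(n:ℝ)+1) : ℝ) : ℂ)) :=
    (Complex.continuous_ofReal.tendsto _).comp hq
  have hfinal := hfp.add hfq
  have heq2 : (Complex.I * (((0:ℝ)) : ℂ) + ((1/(2*(n:ℝ)+1) : ℝ) : ℂ)) = 1 / (2 * (n:ℂ) + 1) := by
    push_cast
    ring
  rw [heq2] at hfinal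
  refine Filter.Tendsto.congr' ?_ hfinal
  filter_upwards [self_mem_nhdsWithin] with k hk
  simp only [sphh]
  push_cast
  linear_combination (-((k:ℂ) * (sphj n k : ℂ) * (sphy n k : ℂ))) * Complex.I_sq
end

section
/- For every natural number n, the eigenvalue of the double-layer boundary integral operator on the unit sphere, λ_n(H)(k) = 1/2 + i·k²·h_n′(k)·j_n(k), converges to −1/(2(2n+1)) as k → 0⁺. -/
open Real Complex Filter Topology

open scoped ContDiff


noncomputable def rayA (f : ℝ → ℝ) : ℕ → ℝ → ℝ
  | 0 => f
  | n+1 => fun x => (2*(n:ℝ)+1) * rayA f n x - x * deriv (rayA f n) x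

lemma rayA_contDiff {f : ℝ → ℝ} (hf : ContDiff ℝ ∞ f) (n : ℕ) : ContDiff ℝ ∞ (rayA f n) := by
  induction n with
  | zero => exact hf
  | succ n ih =>
    have hd : ContDiff ℝ ∞ (deriv (rayA f n)) := (contDiff_infty_iff_deriv.mp ih).2
    exact (contDiff_const.mul ih).sub (contDiff_id.mul hd)

lemma diff_iD {g : ℝ → ℝ} (hg : ContDiff ℝ ∞ g) (m : ℕ) :
    Differentiable ℝ (iteratedDeriv m g) := by
  rw [iteratedDeriv_eq_iterate]
  exact ((hg.iterate_deriv m).differentiable (by simp))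

lemma iD_comb {g h : ℝ → ℝ} (hg : ContDiff ℝ ∞ g) (hh : ContDiff ℝ ∞ h) (c : ℝ) (k : ℕ) :
    ∀ x : ℝ, iteratedDeriv k (fun y => c * g y - y * h y) x
      = c * iteratedDeriv k g x - x * iteratedDeriv k h x - k * iteratedDeriv (k-1) h x := by
  induction k with
  | zero => intro x; simp
  | succ k ih =>
    intro x
    rw [iteratedDeriv_succ]
    have hfun : iteratedDeriv k (fun y => c * g y - y * h y)
        = fun y => c * iteratedDeriv k g y - y * iteratedDeriv k h y
            - k * iteratedDeriv (k-1) h y := funext ih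
    rw [hfun]
    have h1 : HasDerivAt (fun y => c * iteratedDeriv k g y)
        (c * iteratedDeriv (k+1) g x) x := by
      have := ((diff_iD hg k x).hasDerivAt).const_mul c
      rwa [← iteratedDeriv_succ] at this
    have h2 : HasDerivAt (fun y => y * iteratedDeriv k h y)
        (1 * iteratedDeriv k h x + x * iteratedDeriv (k+1) h x) x := by
      have := (hasDerivAt_id x).mul ((diff_iD hh k x).hasDerivAt)
      rwa [← iteratedDeriv_succ, id_eq] at this
    have h3 : HasDerivAt (fun y => (k:ℝ) * iteratedDeriv (k-1) h y)
        ((k:ℝ) * iteratedDeriv k h x) x := by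
      cases k with
      | zero => simpa using hasDerivAt_const x ((0:ℝ) * iteratedDeriv 0 h x)
      | succ m =>
        have := ((diff_iD hh m x).hasDerivAt).const_mul ((m:ℝ)+1)
        rw [← iteratedDeriv_succ] at this
        simpa [Nat.succ_sub_one] using this
    have := ((h1.sub h2).sub h3).deriv
    refine this.trans ?_
    push_cast
    ring

lemma rayA_iD_zero {f : ℝ → ℝ} (hf : ContDiff ℝ ∞ f) (n k : ℕ) :
    iteratedDeriv k (rayA f n) 0
      = (∏ j ∈ Finset.range n, ((2*(j:ℝ)+1) - k)) * iteratedDeriv k f 0 := by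
  induction n with
  | zero => simp [rayA]
  | succ n ih =>
    have hA := rayA_contDiff hf n
    have hd : ContDiff ℝ ∞ (deriv (rayA f n)) := (contDiff_infty_iff_deriv.mp hA).2
    have : rayA f (n+1) = fun x => (2*(n:ℝ)+1) * rayA f n x - x * deriv (rayA f n) x := rfl
    rw [this, iD_comb hA hd (2*(n:ℝ)+1) k 0]
    have hk : (k:ℝ) * iteratedDeriv (k-1) (deriv (rayA f n)) 0
        = (k:ℝ) * iteratedDeriv k (rayA f n) 0 := by
      cases k with
      | zero => simp
      | succ m => rw [← iteratedDeriv_succ', Nat.succ_sub_one]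
    rw [hk, Finset.prod_range_succ, ih]
    ring

lemma iD_sin (k : ℕ) : iteratedDeriv k Real.sin = fun x => Real.sin (x + k*(π/2)) := by
  induction k with
  | zero => simp
  | succ k ih =>
    rw [iteratedDeriv_succ, ih]
    funext x
    have hd : HasDerivAt (fun y : ℝ => Real.sin (y + k*(π/2))) (Real.cos (x + k*(π/2))) x := by
      simpa using (HasDerivAt.sin ((hasDerivAt_id x).add_const ((k:ℝ)*(π/2))))
    rw [hd.deriv, show x + ((k+1 : ℕ):ℝ)*(π/2) = (x + k*(π/2)) + π/2 by push_cast; ring,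
      Real.sin_add_pi_div_two]

lemma iD_cos (k : ℕ) : iteratedDeriv k Real.cos = fun x => Real.cos (x + k*(π/2)) := by
  induction k with
  | zero => simp
  | succ k ih =>
    rw [iteratedDeriv_succ, ih]
    funext x
    have hd : HasDerivAt (fun y : ℝ => Real.cos (y + k*(π/2))) (-Real.sin (x + k*(π/2))) x := by
      simpa using (HasDerivAt.cos ((hasDerivAt_id x).add_const ((k:ℝ)*(π/2))))
    rw [hd.deriv, show x + ((k+1 : ℕ):ℝ)*(π/2) = (x + k*(π/2)) + π/2 by push_cast; ring,
      Real.cos_add_pi_div_two]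

lemma iD_sin_even (m : ℕ) : iteratedDeriv (2*m) Real.sin 0 = 0 := by
  rw [iD_sin]
  simp only [zero_add]
  rw [show ((2*m : ℕ):ℝ)*(π/2) = m * π by push_cast; ring, Real.sin_nat_mul_pi]

lemma iD_sin_odd (m : ℕ) : iteratedDeriv (2*m+1) Real.sin 0 = (-1)^m := by
  rw [iD_sin]
  simp only [zero_add]
  rw [show ((2*m+1 : ℕ):ℝ)*(π/2) = m*π + π/2 by push_cast; ring, Real.sin_add_pi_div_two]
  have := Real.cos_nat_mul_pi_sub 0 m
  simpa using this

lemma prod_shift (n : ℕ) :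
    (∏ j ∈ Finset.range n, ((2*(j:ℝ)+1) - ((2*n+1 : ℕ):ℝ))) = (-2)^n * n.factorial := by
  have hre := Finset.prod_range_reflect (fun j => (2*(j:ℝ)+1) - ((2*n+1 : ℕ):ℝ)) n
  rw [← hre]
  have : ∀ j ∈ Finset.range n, (2*((n-1-j : ℕ):ℝ)+1) - ((2*n+1 : ℕ):ℝ) = (-2) * ((j:ℝ)+1) := by
    intro j hj
    rw [Finset.mem_range] at hj
    have h1 : ((n-1-j : ℕ):ℝ) = (n:ℝ) - 1 - j := by
      have : n - 1 - j = n - (1+j) := by omega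
      rw [this, Nat.cast_sub (by omega)]
      push_cast
      ring
    rw [h1]
    push_cast
    ring
  rw [Finset.prod_congr rfl this, Finset.prod_mul_distrib, Finset.prod_const,
    Finset.card_range]
  have hp : (∏ j ∈ Finset.range n, ((j:ℝ)+1)) = (n.factorial:ℝ) := by
    rw [← Finset.prod_range_add_one_eq_factorial]
    push_cast
    ring
  rw [hp]

lemma SA_iD_lt (n : ℕ) {k : ℕ} (hk : k < 2*n+1) :
    iteratedDeriv k (rayA Real.sin n) 0 = 0 := by
  rw [rayA_iD_zero Real.contDiff_sin]
  rcases Nat.even_or_odd k with ⟨m, hm⟩ | ⟨m, hm⟩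
  · rw [hm, show m + m = 2*m by ring, iD_sin_even, mul_zero]
  · subst hm
    have hmn : m ∈ Finset.range n := Finset.mem_range.mpr (by omega)
    rw [Finset.prod_eq_zero hmn (by push_cast; ring), zero_mul]

lemma SA_iD_top (n : ℕ) :
    iteratedDeriv (2*n+1) (rayA Real.sin n) 0 = 2^n * n.factorial := by
  rw [rayA_iD_zero Real.contDiff_sin, iD_sin_odd, prod_shift]
  have : (-2:ℝ)^n * (n.factorial:ℝ) * (-1)^n = ((-2)*(-1):ℝ)^n * n.factorial := by
    rw [mul_pow]
    ring
  rw [this]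
  norm_num

lemma SB_zero (n : ℕ) :
    rayA Real.cos n 0 = ∏ j ∈ Finset.range n, (2*(j:ℝ)+1) := by
  have := rayA_iD_zero Real.contDiff_cos n 0
  simpa using this

lemma SB_deriv_zero (n : ℕ) : deriv (rayA Real.cos n) 0 = 0 := by
  have := rayA_iD_zero Real.contDiff_cos n 1
  rw [iteratedDeriv_one] at this
  rw [this, iteratedDeriv_one, Real.deriv_cos, Real.sin_zero, neg_zero, mul_zero]

lemma taylor_lim : ∀ (N : ℕ) (f : ℝ → ℝ), ContDiff ℝ ∞ f →
    (∀ k, k < N → iteratedDeriv k f 0 = 0) →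
    Tendsto (fun x => f x / x^N) (𝓝[>] (0:ℝ))
      (𝓝 (iteratedDeriv N f 0 / N.factorial)) := by
  intro N
  induction N with
  | zero =>
    intro f hf _
    simp only [pow_zero, div_one, iteratedDeriv_zero, Nat.factorial_zero, Nat.cast_one]
    exact (hf.continuous.tendsto 0).mono_left nhdsWithin_le_nhds
  | succ N ih =>
    intro f hf h
    have hdf := contDiff_infty_iff_deriv.mp hf
    have hdiv : Tendsto (fun x => deriv f x / ((N+1:ℝ) * x^N)) (𝓝[>] (0:ℝ))
        (𝓝 (iteratedDeriv (N+1) f 0 / (N+1).factorial)) := by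
      have hih := ih (deriv f) hdf.2 (fun k hk => by
        rw [← iteratedDeriv_succ']
        exact h (k+1) (by omega))
      have := hih.div_const ((N:ℝ)+1)
      have heq : (fun x => deriv f x / x^N / ((N:ℝ)+1))
          = fun x => deriv f x / ((N+1:ℝ) * x^N) := by
        funext x
        rw [div_div]
        ring_nf
      rw [heq] at this
      convert this using 2
      rw [← iteratedDeriv_succ', Nat.factorial_succ]
      push_cast
      rw [div_div]
      ring_nf
    apply HasDerivAt.lhopital_zero_nhdsGT (f' := deriv f) (g' := fun x => (N+1:ℝ) * x^N)
    · exact Eventually.of_forall fun x => (hdf.1 x).hasDerivAt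
    · exact Eventually.of_forall fun x => by simpa using (hasDerivAt_pow (N+1) x)
    · filter_upwards [self_mem_nhdsWithin] with x hx
      have hx : (0:ℝ) < x := hx
      positivity
    · have h0 : f 0 = 0 := by
        have := h 0 (by omega)
        simpa using this
      have := (hf.continuous.tendsto 0).mono_left (nhdsWithin_le_nhds (s := Set.Ioi (0:ℝ)))
      rwa [h0] at this
    · have : Tendsto (fun x : ℝ => x^(N+1)) (𝓝 (0:ℝ)) (𝓝 ((0:ℝ)^(N+1))) :=
        (continuous_pow (N+1)).tendsto 0
      rw [zero_pow (by omega)] at this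
      exact this.mono_left nhdsWithin_le_nhds
    · exact hdiv

lemma sphStep_iterate_eq {f : ℝ → ℝ} (hf : ContDiff ℝ ∞ f) (n : ℕ) :
    ∀ x : ℝ, 0 < x →
    (sphStep^[n] (fun t => f t / t)) x = (-1)^n * rayA f n x / x^(2*n+1) := by
  induction n with
  | zero => intro x hx; simp [rayA]
  | succ n ih =>
    intro x hx
    rw [Function.iterate_succ_apply']
    show deriv (sphStep^[n] fun t => f t / t) x / x = _
    have hev : (sphStep^[n] fun t => f t / t)
        =ᶠ[𝓝 x] (fun y => (-1:ℝ)^n * rayA f n y / y^(2*n+1)) := by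
      filter_upwards [Ioi_mem_nhds hx] with y hy using ih y hy
    rw [hev.deriv_eq]
    have hA : DifferentiableAt ℝ (rayA f n) x :=
      ((rayA_contDiff hf n).differentiable (by simp)).differentiableAt
    have hxne : x ≠ 0 := ne_of_gt hx
    have hnum : HasDerivAt (fun y => (-1:ℝ)^n * rayA f n y)
        ((-1:ℝ)^n * deriv (rayA f n) x) x := (hA.hasDerivAt).const_mul _
    have hden : HasDerivAt (fun y : ℝ => y^(2*n+1)) (((2*n+1 : ℕ):ℝ) * x^(2*n)) x := by
      simpa using hasDerivAt_pow (2*n+1) x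
    have hdrv := (hnum.div hden (pow_ne_zero _ hxne)).deriv
    rw [show deriv (fun y => (-1:ℝ)^n * rayA f n y / y^(2*n+1)) x = _ from hdrv]
    have hAn1 : rayA f (n+1) x = (2*(n:ℝ)+1) * rayA f n x - x * deriv (rayA f n) x := rfl
    rw [hAn1]
    field_simp
    push_cast
    ring

lemma sphj_eq (n : ℕ) {x : ℝ} (hx : 0 < x) :
    sphj n x = rayA Real.sin n x / x^(n+1) := by
  unfold sphj
  rw [sphStep_iterate_eq Real.contDiff_sin n x hx, neg_pow]
  have hxne : x ≠ 0 := ne_of_gt hx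
  have h1 : ((-1:ℝ)^n)*((-1:ℝ)^n) = 1 := by
    rw [← pow_add]
    exact Even.neg_one_pow ⟨n, by ring⟩
  calc (-1:ℝ)^n * x^n * ((-1)^n * rayA Real.sin n x / x^(2*n+1))
      = ((-1:ℝ)^n*(-1:ℝ)^n) * (x^n * rayA Real.sin n x / x^(2*n+1)) := by ring
    _ = x^n * rayA Real.sin n x / x^(2*n+1) := by rw [h1, one_mul]
    _ = rayA Real.sin n x / x^(n+1) := by
        rw [show 2*n+1 = n+(n+1) by ring, pow_add,
          mul_div_mul_left _ _ (pow_ne_zero n hxne)]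

lemma sphy_eq (n : ℕ) {x : ℝ} (hx : 0 < x) :
    sphy n x = -(rayA Real.cos n x / x^(n+1)) := by
  unfold sphy
  rw [sphStep_iterate_eq Real.contDiff_cos n x hx, neg_pow]
  have hxne : x ≠ 0 := ne_of_gt hx
  have h1 : ((-1:ℝ)^n)*((-1:ℝ)^n) = 1 := by
    rw [← pow_add]
    exact Even.neg_one_pow ⟨n, by ring⟩
  have : (-1:ℝ)^n * x^n * ((-1)^n * rayA Real.cos n x / x^(2*n+1))
      = rayA Real.cos n x / x^(n+1) := by
    calc (-1:ℝ)^n * x^n * ((-1)^n * rayA Real.cos n x / x^(2*n+1))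
        = ((-1:ℝ)^n*(-1:ℝ)^n) * (x^n * rayA Real.cos n x / x^(2*n+1)) := by ring
      _ = x^n * rayA Real.cos n x / x^(2*n+1) := by rw [h1, one_mul]
      _ = rayA Real.cos n x / x^(n+1) := by
          rw [show 2*n+1 = n+(n+1) by ring, pow_add,
            mul_div_mul_left _ _ (pow_ne_zero n hxne)]
  rw [this]

lemma sphj_hasDeriv (n : ℕ) {x : ℝ} (hx : 0 < x) :
    HasDerivAt (sphj n)
      ((deriv (rayA Real.sin n) x * x^(n+1)
        - rayA Real.sin n x * (((n+1 : ℕ):ℝ) * x^n)) / (x^(n+1))^2) x := by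
  have hxne : x ≠ 0 := ne_of_gt hx
  have hA : DifferentiableAt ℝ (rayA Real.sin n) x :=
    ((rayA_contDiff Real.contDiff_sin n).differentiable
      (by simp)).differentiableAt
  have hden : HasDerivAt (fun y : ℝ => y^(n+1)) (((n+1 : ℕ):ℝ) * x^n) x := by
    simpa using hasDerivAt_pow (n+1) x
  have hcf : HasDerivAt (fun y => rayA Real.sin n y / y^(n+1)) _ x :=
    hA.hasDerivAt.div hden (pow_ne_zero _ hxne)
  apply hcf.congr_of_eventuallyEq
  filter_upwards [Ioi_mem_nhds hx] with y hy using sphj_eq n hy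

lemma sphy_hasDeriv (n : ℕ) {x : ℝ} (hx : 0 < x) :
    HasDerivAt (sphy n)
      (-((deriv (rayA Real.cos n) x * x^(n+1)
        - rayA Real.cos n x * (((n+1 : ℕ):ℝ) * x^n)) / (x^(n+1))^2)) x := by
  have hxne : x ≠ 0 := ne_of_gt hx
  have hA : DifferentiableAt ℝ (rayA Real.cos n) x :=
    ((rayA_contDiff Real.contDiff_cos n).differentiable
      (by simp)).differentiableAt
  have hden : HasDerivAt (fun y : ℝ => y^(n+1)) (((n+1 : ℕ):ℝ) * x^n) x := by
    simpa using hasDerivAt_pow (n+1) x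
  have hcf := (hA.hasDerivAt.div hden (pow_ne_zero _ hxne)).neg
  apply hcf.congr_of_eventuallyEq
  filter_upwards [Ioi_mem_nhds hx] with y hy using sphy_eq n hy

lemma sphh'_eq (n : ℕ) {x : ℝ} (hx : 0 < x) :
    sphh' n x = (sphj' n x : ℂ) + Complex.I * (sphy' n x : ℂ) := by
  have hj := sphj_hasDeriv n hx
  have hy := sphy_hasDeriv n hx
  have hh : HasDerivAt (sphh n) ((sphj' n x : ℂ) + Complex.I * (sphy' n x : ℂ)) x := by
    unfold sphh
    have h1 := hj.ofReal_comp
    have h2 := (hy.ofReal_comp).const_mul Complex.I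
    have := h1.add h2
    unfold sphj' sphy'
    rw [hj.deriv, hy.deriv]
    exact this.congr_deriv (by push_cast; ring)
  unfold sphh'
  exact hh.deriv

lemma fact_id (n : ℕ) : ((2*n+1).factorial : ℝ)
    = 2^n * n.factorial * (∏ j ∈ Finset.range n, (2*(j:ℝ)+1)) * (2*(n:ℝ)+1) := by
  induction n with
  | zero => simp
  | succ n ih =>
    rw [show 2*(n+1)+1 = (2*n+1)+1+1 from by ring, Nat.factorial_succ, Nat.factorial_succ,
      Nat.factorial_succ n, Finset.prod_range_succ]
    push_cast
    rw [ih]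
    push_cast
    ring

lemma hu_lim (n : ℕ) : Tendsto (fun x => rayA Real.sin n x / x^(2*n+1)) (𝓝[>] (0:ℝ))
    (𝓝 ((2^n * n.factorial : ℝ) / (2*n+1).factorial)) := by
  have := taylor_lim (2*n+1) (rayA Real.sin n) (rayA_contDiff Real.contDiff_sin n)
    (fun k hk => SA_iD_lt n hk)
  rwa [SA_iD_top] at this

lemma hu'_lim (n : ℕ) : Tendsto (fun x => deriv (rayA Real.sin n) x / x^(2*n)) (𝓝[>] (0:ℝ))
    (𝓝 ((2^n * n.factorial : ℝ) / (2*n).factorial)) := by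
  have hsm := (contDiff_infty_iff_deriv.mp (rayA_contDiff Real.contDiff_sin n)).2
  have := taylor_lim (2*n) (deriv (rayA Real.sin n)) hsm
    (fun k hk => by rw [← iteratedDeriv_succ']; exact SA_iD_lt n (by omega))
  rwa [← iteratedDeriv_succ', SA_iD_top] at this

lemma hv_lim (n : ℕ) : Tendsto
    (fun x => ((n:ℝ)+1) * rayA Real.cos n x - x * deriv (rayA Real.cos n) x) (𝓝[>] (0:ℝ))
    (𝓝 (((n:ℝ)+1) * ∏ j ∈ Finset.range n, (2*(j:ℝ)+1))) := by
  have hB := rayA_contDiff Real.contDiff_cos n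
  have hBd := (contDiff_infty_iff_deriv.mp hB).2
  have hc : Continuous (fun x => ((n:ℝ)+1) * rayA Real.cos n x - x * deriv (rayA Real.cos n) x) :=
    (continuous_const.mul hB.continuous).sub (continuous_id.mul hBd.continuous)
  have := (hc.tendsto 0).mono_left (nhdsWithin_le_nhds (s := Set.Ioi (0:ℝ)))
  simpa [SB_zero, SB_deriv_zero] using this

/-- λ_n(H)(k) = 1/2 + i·k²·h_n′(k)·j_n(k) → −1/(2(2n+1)) as k → 0⁺. -/
theorem doubleLayer_eigenvalue_limit (n : ℕ) :
    Filter.Tendsto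
      (fun k : ℝ => (1 / 2 : ℂ) + Complex.I * (k : ℂ) ^ 2 * sphh' n k * (sphj n k : ℂ))
      (𝓝[>] (0 : ℝ)) (𝓝 (-(1 / (2 * (2 * (n : ℂ) + 1))))) := by
  set A := rayA Real.sin n with hA
  set B := rayA Real.cos n with hB
  set g1 : ℝ → ℝ := fun k => k^(2*n+1) * (deriv A k / k^(2*n) * (A k / k^(2*n+1))
      - ((n:ℝ)+1) * (A k / k^(2*n+1) * (A k / k^(2*n+1)))) with hg1
  set g2 : ℝ → ℝ := fun k => (((n:ℝ)+1) * B k - k * deriv B k) * (A k / k^(2*n+1)) with hg2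
  set Dn : ℝ := ∏ j ∈ Finset.range n, (2*(j:ℝ)+1) with hDn
  set lam : ℝ := (2^n * n.factorial : ℝ) / (2*n+1).factorial with hlam
  -- pointwise identity
  have key : ∀ k : ℝ, k ∈ Set.Ioi (0:ℝ) →
      (1 / 2 : ℂ) + ((g1 k : ℝ) : ℂ) * Complex.I - ((g2 k : ℝ) : ℂ)
        = (1 / 2 : ℂ) + Complex.I * (k : ℂ) ^ 2 * sphh' n k * (sphj n k : ℂ) := by
    intro k hk
    have hk : (0:ℝ) < k := hk
    have hkne : k ≠ 0 := ne_of_gt hk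
    have hj'v : sphj' n k = (deriv A k * k^(n+1) - A k * (((n+1 : ℕ):ℝ) * k^n)) / (k^(n+1))^2 := by
      show deriv (sphj n) k = _
      exact (sphj_hasDeriv n hk).deriv
    have hy'v : sphy' n k
        = -((deriv B k * k^(n+1) - B k * (((n+1 : ℕ):ℝ) * k^n)) / (k^(n+1))^2) := by
      show deriv (sphy n) k = _
      exact (sphy_hasDeriv n hk).deriv
    have hjv : sphj n k = A k / k^(n+1) := sphj_eq n hk
    have e1 : k^2 * sphj' n k * sphj n k = g1 k := by
      rw [hj'v, hjv, hg1]
      field_simp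
      push_cast
      ring
    have e2 : k^2 * sphy' n k * sphj n k = g2 k := by
      rw [hy'v, hjv, hg2]
      field_simp
      push_cast
      ring
    rw [sphh'_eq n hk, ← e1, ← e2]
    push_cast
    have hI := Complex.I_mul_I
    linear_combination (-((k:ℂ)^2 * (sphy' n k : ℂ) * (sphj n k : ℂ))) * hI
  -- limits
  have hpow : Tendsto (fun k : ℝ => k^(2*n+1)) (𝓝[>] (0:ℝ)) (𝓝 0) := by
    have : Tendsto (fun x : ℝ => x^(2*n+1)) (𝓝 (0:ℝ)) (𝓝 ((0:ℝ)^(2*n+1))) :=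
      (continuous_pow (2*n+1)).tendsto 0
    rw [zero_pow (by omega)] at this
    exact this.mono_left nhdsWithin_le_nhds
  have t1 : Tendsto g1 (𝓝[>] (0:ℝ)) (𝓝 0) := by
    have hin : Tendsto (fun k => deriv A k / k^(2*n) * (A k / k^(2*n+1))
        - ((n:ℝ)+1) * (A k / k^(2*n+1) * (A k / k^(2*n+1)))) (𝓝[>] (0:ℝ))
        (𝓝 ((2^n * n.factorial : ℝ) / (2*n).factorial * lam - ((n:ℝ)+1) * (lam * lam))) :=
      ((hu'_lim n).mul (hu_lim n)).sub
        (tendsto_const_nhds.mul ((hu_lim n).mul (hu_lim n)))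
    have := hpow.mul hin
    simpa using this
  have t2 : Tendsto g2 (𝓝[>] (0:ℝ)) (𝓝 ((((n:ℝ)+1) * Dn) * lam)) :=
    (hv_lim n).mul (hu_lim n)
  have T : Tendsto (fun k : ℝ => (1 / 2 : ℂ) + ((g1 k : ℝ) : ℂ) * Complex.I - ((g2 k : ℝ) : ℂ))
      (𝓝[>] (0:ℝ))
      (𝓝 ((1 / 2 : ℂ) + ((0:ℝ) : ℂ) * Complex.I - (((((n:ℝ)+1) * Dn) * lam : ℝ) : ℂ))) := by
    apply Tendsto.sub
    · exact tendsto_const_nhds.add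
        (((Complex.continuous_ofReal.tendsto _).comp t1).mul tendsto_const_nhds)
    · exact (Complex.continuous_ofReal.tendsto _).comp t2
  have hval : (1 / 2 : ℂ) + ((0:ℝ) : ℂ) * Complex.I - (((((n:ℝ)+1) * Dn) * lam : ℝ) : ℂ)
      = -(1 / (2 * (2 * (n : ℂ) + 1))) := by
    have hDnpos : 0 < Dn := Finset.prod_pos (fun j _ => by positivity)
    have hr : (((n:ℝ)+1) * Dn) * lam = ((n:ℝ)+1) / (2*(n:ℝ)+1) := by
      rw [hlam, fact_id n, ← hDn]
      have h1 : (0:ℝ) < 2^n * (n.factorial:ℝ) := by positivity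
      have h2 : (0:ℝ) < 2*(n:ℝ)+1 := by positivity
      field_simp
    rw [hr]
    have hne : (2*(n:ℂ)+1) ≠ 0 := by
      have : ((2*n+1 : ℕ) : ℂ) ≠ 0 := Nat.cast_ne_zero.mpr (by omega)
      push_cast at this
      convert this using 2 <;> push_cast <;> ring
    push_cast
    field_simp
    ring
  rw [hval] at T
  apply T.congr'
  filter_upwards [self_mem_nhdsWithin] with k hk using key k hk
end

section
/- For every natural number n, the eigenvalue of the operator 1/2 − H on the unit sphere, given by −i·k²·h_n′(k)·j_n(k), converges to (n+1)/(2n+1) as k → 0⁺; in particular these limits are bounded away from 0, so the boundary integral equation for the sound-hard problem stays stable for small wavenumbers. -/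
open Real Complex Filter Topology
open scoped ContDiff Nat

namespace SphAux

open FormalMultilinearSeries

noncomputable def cS : ℕ → ℝ := fun m => (-1) ^ m / (2 * m + 1)!
noncomputable def cC : ℕ → ℝ := fun m => (-1) ^ m / (2 * m)!

noncomputable def pS : FormalMultilinearSeries ℝ ℝ ℝ := ofScalars ℝ cS
noncomputable def pC : FormalMultilinearSeries ℝ ℝ ℝ := ofScalars ℝ cC

noncomputable def S : ℝ → ℝ := pS.sum
noncomputable def Cc : ℝ → ℝ := pC.sum

lemma radius_top (c : ℕ → ℝ) (h : ∀ m, |c m| ≤ 1 / m !) :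
    (ofScalars ℝ c).radius = ⊤ := by
  apply FormalMultilinearSeries.radius_eq_top_of_summable_norm
  intro r
  refine Summable.of_nonneg_of_le (fun n => ?_) (fun n => ?_)
    (Real.summable_pow_div_factorial r)
  · exact mul_nonneg (norm_nonneg _) (pow_nonneg r.coe_nonneg n)
  · rw [ofScalars_norm, Real.norm_eq_abs]
    calc |c n| * (r:ℝ) ^ n ≤ 1 / n ! * (r:ℝ) ^ n :=
          mul_le_mul_of_nonneg_right (h n) (pow_nonneg r.coe_nonneg n)
      _ = (r:ℝ) ^ n / n ! := by ring

lemma abs_cS_le (m : ℕ) : |cS m| ≤ 1 / m ! := by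
  rw [cS, abs_div, _root_.abs_pow, abs_neg, abs_one, one_pow, Nat.abs_cast]
  gcongr
  omega

lemma abs_cC_le (m : ℕ) : |cC m| ≤ 1 / m ! := by
  rw [cC, abs_div, _root_.abs_pow, abs_neg, abs_one, one_pow, Nat.abs_cast]
  gcongr
  omega

lemma hS : HasFPowerSeriesOnBall S pS 0 ⊤ := by
  have h := pS.hasFPowerSeriesOnBall (by rw [pS, radius_top _ abs_cS_le]; simp)
  rwa [show pS.radius = ⊤ from radius_top _ abs_cS_le] at h

lemma hC : HasFPowerSeriesOnBall Cc pC 0 ⊤ := by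
  have h := pC.hasFPowerSeriesOnBall (by rw [pC, radius_top _ abs_cC_le]; simp)
  rwa [show pC.radius = ⊤ from radius_top _ abs_cC_le] at h

lemma contS : ContDiff ℝ ∞ S := by
  refine AnalyticOnNhd.contDiff (fun u _ => hS.analyticAt_of_mem ?_)
  simp [EMetric.mem_ball, edist_lt_top]

lemma contC : ContDiff ℝ ∞ Cc := by
  refine AnalyticOnNhd.contDiff (fun u _ => hC.analyticAt_of_mem ?_)
  simp [EMetric.mem_ball, edist_lt_top]

lemma S_apply (u : ℝ) : S u = ∑' m, cS m * u ^ m := by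
  have := ofScalars_sum_eq (E := ℝ) cS u
  simpa [ofScalarsSum, pS, S, smul_eq_mul] using this

lemma C_apply (u : ℝ) : Cc u = ∑' m, cC m * u ^ m := by
  have := ofScalars_sum_eq (E := ℝ) cC u
  simpa [ofScalarsSum, pC, Cc, smul_eq_mul] using this

lemma sin_eq (x : ℝ) : Real.sin x = x * S (x ^ 2) := by
  rw [S_apply, Real.sin_eq_tsum, ← tsum_mul_left]
  refine tsum_congr fun m => ?_
  rw [cS, ← pow_mul]
  have h1 : x ^ (2 * m + 1) = x * x ^ (2 * m) := by ring
  rw [h1]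
  ring

lemma cos_eq (x : ℝ) : Real.cos x = Cc (x ^ 2) := by
  rw [C_apply, Real.cos_eq_tsum]
  refine tsum_congr fun m => ?_
  rw [cC, ← pow_mul]
  ring

noncomputable def Sn (n : ℕ) : ℝ → ℝ := deriv^[n] S

lemma contSn (n : ℕ) : ContDiff ℝ ∞ (Sn n) := ContDiff.iterate_deriv n contS

lemma Sn_succ (n : ℕ) : Sn (n + 1) = deriv (Sn n) := Function.iterate_succ_apply' deriv n S

lemma Sn_zero_val (n : ℕ) : Sn n 0 = n ! * cS n := by
  have h1 : Sn n 0 = iteratedDeriv n S 0 := by rw [iteratedDeriv_eq_iterate]; rfl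
  rw [h1, iteratedDeriv_eq_iteratedFDeriv, ← hS.factorial_smul 1 n]
  rw [pS, ofScalars_apply_eq]
  simp [smul_eq_mul]

lemma C_zero : Cc 0 = 1 := by
  rw [C_apply, tsum_eq_single 0 (by intro b hb; simp [zero_pow hb])]
  simp [cC]

end SphAux

namespace SphAux

noncomputable def H : ℕ → ℝ → ℝ
  | 0 => Cc
  | (n+1) => fun u => 2 * u * deriv (H n) u - (2 * n + 1) * H n u

noncomputable def D : ℕ → ℝ
  | 0 => 1
  | (n+1) => -(2 * (n:ℝ) + 1) * D n

lemma contH (n : ℕ) : ContDiff ℝ ∞ (H n) := by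
  induction n with
  | zero => exact contC
  | succ n ih =>
    have hd : ContDiff ℝ ∞ (deriv (H n)) := (contDiff_infty_iff_deriv.mp ih).2
    show ContDiff ℝ ∞ (fun u => 2 * u * deriv (H n) u - (2 * n + 1) * H n u)
    exact ((contDiff_const.mul contDiff_id).mul hd).sub (contDiff_const.mul ih)

lemma H_zero_val (n : ℕ) : H n 0 = D n := by
  induction n with
  | zero => exact C_zero
  | succ n ih =>
    show 2 * 0 * deriv (H n) 0 - (2 * n + 1) * H n 0 = -(2 * (n:ℝ) + 1) * D n
    rw [ih]; ring

lemma keyD (n : ℕ) : (2:ℝ) ^ n * n ! * D n = (-1) ^ n * (2 * n)! := by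
  induction n with
  | zero => simp [D]
  | succ n ih =>
    have h1 : ((n+1)! : ℝ) = (n+1) * n ! := by rw [Nat.factorial_succ]; push_cast; ring
    have h2 : ((2*(n+1))! : ℝ) = (2*n+2) * ((2*n+1) * (2*n)!) := by
      have : 2*(n+1) = (2*n+1)+1 := by omega
      rw [this, Nat.factorial_succ, Nat.factorial_succ]; push_cast; ring
    show (2:ℝ) ^ (n+1) * (n+1)! * (-(2 * (n:ℝ) + 1) * D n) = (-1) ^ (n+1) * (2*(n+1))!
    rw [h1, h2, pow_succ, pow_succ]
    linear_combination (2 * ((n:ℝ) + 1) * (-(2 * (n:ℝ) + 1))) * ih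

lemma diffSn (n : ℕ) : Differentiable ℝ (Sn n) :=
  (contSn n).differentiable (by simp)

lemma diffH (n : ℕ) : Differentiable ℝ (H n) :=
  (contH n).differentiable (by simp)

/-- `HasDerivAt` for `y ↦ Sn n (y^2)`. -/
lemma hasDerivAt_Sn_sq (n : ℕ) (x : ℝ) :
    HasDerivAt (fun y => Sn n (y ^ 2)) (Sn (n+1) (x ^ 2) * (2 * x)) x := by
  have h1 : HasDerivAt (Sn n) (Sn (n+1) (x ^ 2)) (x ^ 2) := by
    rw [Sn_succ]
    exact ((diffSn n) (x ^ 2)).hasDerivAt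
  have h2 : HasDerivAt (fun y : ℝ => y ^ 2) (2 * x) x := by
    simpa using hasDerivAt_pow 2 x
  exact HasDerivAt.comp (h := fun y : ℝ => y ^ 2) x h1 h2

/-- `HasDerivAt` for `y ↦ H n (y^2)`. -/
lemma hasDerivAt_H_sq (n : ℕ) (x : ℝ) :
    HasDerivAt (fun y => H n (y ^ 2)) (deriv (H n) (x ^ 2) * (2 * x)) x := by
  have h1 : HasDerivAt (H n) (deriv (H n) (x ^ 2)) (x ^ 2) := ((diffH n) (x ^ 2)).hasDerivAt
  have h2 : HasDerivAt (fun y : ℝ => y ^ 2) (2 * x) x := by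
    simpa using hasDerivAt_pow 2 x
  exact HasDerivAt.comp (h := fun y : ℝ => y ^ 2) x h1 h2

lemma Gsin (n : ℕ) : ∀ x : ℝ, x ≠ 0 →
    (sphStep^[n] (fun t => Real.sin t / t)) x = 2 ^ n * Sn n (x ^ 2) := by
  induction n with
  | zero =>
    intro x hx
    simp only [Function.iterate_zero, id_eq, pow_zero, one_mul]
    rw [sin_eq x, mul_div_cancel_left₀ _ hx]
    rfl
  | succ n ih =>
    intro x hx
    rw [Function.iterate_succ_apply']
    show deriv (sphStep^[n] (fun t => Real.sin t / t)) x / x = _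
    have heq : (sphStep^[n] (fun t => Real.sin t / t)) =ᶠ[𝓝 x]
        (fun y => 2 ^ n * Sn n (y ^ 2)) := by
      filter_upwards [isOpen_compl_singleton.mem_nhds (Set.mem_compl_singleton_iff.mpr hx)]
        with y hy
      exact ih y hy
    have hd : HasDerivAt (fun y => 2 ^ n * Sn n (y ^ 2))
        (2 ^ n * (Sn (n+1) (x ^ 2) * (2 * x))) x := (hasDerivAt_Sn_sq n x).const_mul _
    rw [heq.deriv_eq, hd.deriv]
    field_simp
    ring

lemma Gcos (n : ℕ) : ∀ x : ℝ, x ≠ 0 →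
    (sphStep^[n] (fun t => Real.cos t / t)) x = H n (x ^ 2) / x ^ (2 * n + 1) := by
  induction n with
  | zero =>
    intro x hx
    show Real.cos x / x = H 0 (x ^ 2) / x ^ (2 * 0 + 1)
    rw [cos_eq x, pow_one]
    rfl
  | succ n ih =>
    intro x hx
    rw [Function.iterate_succ_apply']
    show deriv (sphStep^[n] (fun t => Real.cos t / t)) x / x = _
    have heq : (sphStep^[n] (fun t => Real.cos t / t)) =ᶠ[𝓝 x]
        (fun y => H n (y ^ 2) / y ^ (2 * n + 1)) := by
      filter_upwards [isOpen_compl_singleton.mem_nhds (Set.mem_compl_singleton_iff.mpr hx)]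
        with y hy
      exact ih y hy
    have hd : HasDerivAt (fun y => H n (y ^ 2) / y ^ (2 * n + 1))
        ((deriv (H n) (x ^ 2) * (2 * x) * x ^ (2 * n + 1)
          - H n (x ^ 2) * ((2 * n + 1) * x ^ (2 * n))) / (x ^ (2 * n + 1)) ^ 2) x := by
      have := (hasDerivAt_H_sq n x).div (hasDerivAt_pow (2 * n + 1) x)
        (pow_ne_zero _ hx)
      simpa [Pi.div_def] using this
    rw [heq.deriv_eq, hd.deriv]
    show _ = (2 * x ^ 2 * deriv (H n) (x ^ 2) - (2 * n + 1) * H n (x ^ 2)) / x ^ (2 * (n+1) + 1)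
    field_simp
    ring

end SphAux

namespace SphAux

lemma jj (n : ℕ) (x : ℝ) (hx : x ≠ 0) :
    sphj n x = (-1) ^ n * 2 ^ n * (x ^ n * Sn n (x ^ 2)) := by
  rw [sphj, Gsin n x hx, neg_pow]; ring

lemma yy (n : ℕ) (x : ℝ) (hx : x ≠ 0) :
    sphy n x = -((-1) ^ n * (H n (x ^ 2) / x ^ (n + 1))) := by
  rw [sphy, Gcos n x hx, neg_pow]
  have h : x ^ (2 * n + 1) = x ^ n * x ^ (n + 1) := by rw [← pow_add]; congr 1; omega
  rw [h]
  field_simp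

noncomputable def Jd (n : ℕ) (x : ℝ) : ℝ :=
  (-1) ^ n * 2 ^ n * ((n : ℝ) * x ^ (n - 1) * Sn n (x ^ 2) + 2 * x ^ (n + 1) * Sn (n + 1) (x ^ 2))

noncomputable def Yd (n : ℕ) (x : ℝ) : ℝ :=
  -((-1) ^ n * ((deriv (H n) (x ^ 2) * (2 * x) * x ^ (n + 1)
      - H n (x ^ 2) * (((n : ℝ) + 1) * x ^ n)) / (x ^ (n + 1)) ^ 2))

lemma hasDerivAt_j (n : ℕ) (x : ℝ) (hx : x ≠ 0) :
    HasDerivAt (sphj n) (Jd n x) x := by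
  have heq : sphj n =ᶠ[𝓝 x] fun y => (-1) ^ n * 2 ^ n * (y ^ n * Sn n (y ^ 2)) := by
    filter_upwards [isOpen_compl_singleton.mem_nhds (Set.mem_compl_singleton_iff.mpr hx)]
      with y hy
    exact jj n y hy
  have h1 := (hasDerivAt_pow n x).mul (hasDerivAt_Sn_sq n x)
  have h2 := (h1.const_mul ((-1 : ℝ) ^ n * 2 ^ n)).congr_of_eventuallyEq heq
  refine h2.congr_deriv ?_
  rw [Jd]; ring

lemma hasDerivAt_y (n : ℕ) (x : ℝ) (hx : x ≠ 0) :
    HasDerivAt (sphy n) (Yd n x) x := by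
  have heq : sphy n =ᶠ[𝓝 x] fun y => -((-1) ^ n * (H n (y ^ 2) / y ^ (n + 1))) := by
    filter_upwards [isOpen_compl_singleton.mem_nhds (Set.mem_compl_singleton_iff.mpr hx)]
      with y hy
    exact yy n y hy
  have h1 := (hasDerivAt_H_sq n x).div (hasDerivAt_pow (n + 1) x) (pow_ne_zero _ hx)
  have h2 := ((h1.const_mul ((-1 : ℝ) ^ n)).neg).congr_of_eventuallyEq heq
  refine h2.congr_deriv ?_
  rw [Yd, Nat.add_sub_cancel]
  push_cast
  ring

lemma sphh'_val (n : ℕ) (x : ℝ) (hx : x ≠ 0) :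
    sphh' n x = (Jd n x : ℂ) + Complex.I * (Yd n x : ℂ) := by
  have h := ((hasDerivAt_j n x hx).ofReal_comp).add
    (((hasDerivAt_y n x hx).ofReal_comp).const_mul Complex.I)
  exact HasDerivAt.deriv (h : HasDerivAt (sphh n) _ x)

noncomputable def At (n : ℕ) (k : ℝ) : ℝ :=
  -(2 ^ n) * Sn n (k ^ 2) * (2 * k ^ 2 * deriv (H n) (k ^ 2) - ((n : ℝ) + 1) * H n (k ^ 2))

noncomputable def Bt (n : ℕ) (k : ℝ) : ℝ :=
  (2 ^ n * 2 ^ n) * ((n : ℝ) * k ^ (2 * n + 1) * (Sn n (k ^ 2)) ^ 2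
    + 2 * k ^ (2 * n + 3) * Sn (n + 1) (k ^ 2) * Sn n (k ^ 2))

lemma LA (n : ℕ) (k : ℝ) (hk : k ≠ 0) : k ^ 2 * Yd n k * sphj n k = At n k := by
  rw [jj n k hk, Yd, At]
  rcases Nat.even_or_odd n with h | h <;> rw [h.neg_one_pow] <;> field_simp <;> ring

lemma LB (n : ℕ) (k : ℝ) (hk : k ≠ 0) : k ^ 2 * Jd n k * sphj n k = Bt n k := by
  rw [jj n k hk, Jd, Bt]
  cases n with
  | zero => push_cast [Nat.zero_sub]; ring_nf
  | succ m =>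
    rw [Nat.add_sub_cancel]
    have hneg : ((-1 : ℝ)) ^ (m * 2) = 1 := by
      rw [pow_mul, pow_right_comm]; norm_num
    push_cast
    ring_nf
    rw [hneg]
    ring_nf

end SphAux

namespace SphAux

lemma contDerivH (n : ℕ) : Continuous (deriv (H n)) :=
  ((contDiff_infty_iff_deriv.mp (contH n)).2).continuous

lemma contAt (n : ℕ) : Continuous (At n) := by
  have c1 : Continuous (Sn n) := (contSn n).continuous
  have c2 : Continuous (H n) := (contH n).continuous
  have c3 : Continuous (deriv (H n)) := contDerivH n
  have csq : Continuous (fun k : ℝ => k ^ 2) := continuous_pow 2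
  exact (continuous_const.mul (c1.comp csq)).mul
    (((continuous_const.mul csq).mul (c3.comp csq)).sub
      (continuous_const.mul (c2.comp csq)))

lemma contBt (n : ℕ) : Continuous (Bt n) := by
  have c1 : Continuous (Sn n) := (contSn n).continuous
  have c2 : Continuous (Sn (n + 1)) := (contSn (n + 1)).continuous
  have csq : Continuous (fun k : ℝ => k ^ 2) := continuous_pow 2
  exact continuous_const.mul
    (((continuous_const.mul (continuous_pow (2 * n + 1))).mul
        ((c1.comp csq).pow 2)).add
      (((continuous_const.mul (continuous_pow (2 * n + 3))).mul
        (c2.comp csq)).mul (c1.comp csq)))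

lemma Bt_zero (n : ℕ) : Bt n 0 = 0 := by
  simp [Bt, zero_pow (by omega : 2 * n + 1 ≠ 0), zero_pow (by omega : 2 * n + 3 ≠ 0)]

lemma At_zero (n : ℕ) : At n 0 = ((n : ℝ) + 1) / (2 * (n : ℝ) + 1) := by
  have hfac : ((2 * n + 1)! : ℝ) = (2 * (n : ℝ) + 1) * (2 * n)! := by
    rw [show 2 * n + 1 = (2 * n) + 1 from rfl, Nat.factorial_succ]; push_cast; ring
  have hne : ((2 * n)! : ℝ) ≠ 0 := Nat.cast_ne_zero.mpr (Nat.factorial_ne_zero _)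
  have hne2 : ((n !) : ℝ) ≠ 0 := Nat.cast_ne_zero.mpr (Nat.factorial_ne_zero _)
  have hne3 : (2 : ℝ) ^ n ≠ 0 := pow_ne_zero _ two_ne_zero
  have hkey := keyD n
  have hD : D n = (-1) ^ n * ((2 * n)! : ℝ) / (2 ^ n * n !) := by
    rw [eq_div_iff (mul_ne_zero hne3 hne2)]
    linear_combination hkey
  rw [At]
  simp only [ne_eq, OfNat.ofNat_ne_zero, not_false_eq_true, zero_pow, mul_zero, zero_mul,
    zero_sub]
  rw [Sn_zero_val, H_zero_val, hD, cS, hfac]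
  have hneg2 : ((-1 : ℝ)) ^ (n * 2) = 1 := by
    rw [pow_mul, pow_right_comm]; norm_num
  field_simp
  ring_nf
  rw [hneg2]

end SphAux

open SphAux

/-- The eigenvalue of 1/2 − H, namely −i·k²·h_n′(k)·j_n(k), tends to (n+1)/(2n+1)
as k → 0⁺, and these limits are bounded away from 0. -/
theorem halfMinusH_eigenvalue_limit :
    (∀ n : ℕ,
      Filter.Tendsto
        (fun k : ℝ => -(Complex.I * (k : ℂ) ^ 2 * sphh' n k * (sphj n k : ℂ)))
        (𝓝[>] (0 : ℝ)) (𝓝 (((n : ℂ) + 1) / (2 * (n : ℂ) + 1)))) ∧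
    ∃ c : ℝ, 0 < c ∧ ∀ n : ℕ, c ≤ ((n : ℝ) + 1) / (2 * (n : ℝ) + 1) := by
  constructor
  · intro n
    have hev : (fun k : ℝ => -(Complex.I * (k : ℂ) ^ 2 * sphh' n k * (sphj n k : ℂ)))
        =ᶠ[𝓝[>] (0 : ℝ)]
        (fun k : ℝ => ((At n k : ℝ) : ℂ) - ((Bt n k : ℝ) : ℂ) * Complex.I) := by
      filter_upwards [self_mem_nhdsWithin] with k hk
      have hk0 : k ≠ 0 := ne_of_gt hk
      rw [sphh'_val n k hk0, ← LA n k hk0, ← LB n k hk0]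
      push_cast
      linear_combination (-(k : ℂ) ^ 2 * (Yd n k : ℂ) * (sphj n k : ℂ)) * Complex.I_sq
    have hA : Tendsto (At n) (𝓝[>] (0 : ℝ)) (𝓝 (At n 0)) :=
      ((contAt n).tendsto 0).mono_left nhdsWithin_le_nhds
    have hB : Tendsto (Bt n) (𝓝[>] (0 : ℝ)) (𝓝 (Bt n 0)) :=
      ((contBt n).tendsto 0).mono_left nhdsWithin_le_nhds
    have hAc : Tendsto (fun k => ((At n k : ℝ) : ℂ)) (𝓝[>] (0 : ℝ)) (𝓝 ((At n 0 : ℝ) : ℂ)) :=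
      (Complex.continuous_ofReal.tendsto _).comp hA
    have hBc : Tendsto (fun k => ((Bt n k : ℝ) : ℂ)) (𝓝[>] (0 : ℝ)) (𝓝 ((Bt n 0 : ℝ) : ℂ)) :=
      (Complex.continuous_ofReal.tendsto _).comp hB
    have hcomb := hAc.sub (hBc.mul_const Complex.I)
    have hlim : ((At n 0 : ℝ) : ℂ) - ((Bt n 0 : ℝ) : ℂ) * Complex.I
        = ((n : ℂ) + 1) / (2 * (n : ℂ) + 1) := by
      rw [At_zero, Bt_zero]
      push_cast
      ring
    rw [hlim] at hcomb
    exact hcomb.congr' hev.symm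
  · refine ⟨1 / 2, by norm_num, fun n => ?_⟩
    have h0 : (0 : ℝ) < 2 * (n : ℝ) + 1 := by positivity
    rw [div_le_div_iff₀ (by norm_num) h0]
    linarith
end

section
/- For every natural number n, the eigenvalue of the operator 1/2 + H′ on the unit sphere, given by 1 + i·k²·h_n′(k)·j_n(k), converges to n/(2n+1) as k → 0⁺; in particular for n = 0 the limit is 0, so the differentiated boundary integral equation for the sound-soft problem becomes unstable for small wavenumbers. -/
open Real Complex Filter Topology

noncomputable section
namespace SphAux

/-- Coefficient sequences with factorial decay. -/
def Good (c : ℕ → ℝ) : Prop := ∃ K : ℝ, 1 ≤ K ∧ ∀ m, |c m| ≤ K ^ (m + 1) / m.factorial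

/-- Entire power series sum. -/
def E (c : ℕ → ℝ) (u : ℝ) : ℝ := ∑' m, c m * u ^ m

/-- Coefficients of the derivative. -/
def Dc (c : ℕ → ℝ) : ℕ → ℝ := fun m => ((m : ℝ) + 1) * c (m + 1)

theorem Good.summable_norm {c : ℕ → ℝ} (hc : Good c) (u : ℝ) :
    Summable fun m => |c m * u ^ m| := by
  obtain ⟨K, hK1, hK⟩ := hc
  have hKpos : (0:ℝ) < K := lt_of_lt_of_le one_pos hK1
  refine Summable.of_nonneg_of_le (fun m => abs_nonneg _) (fun m => ?_)
    ((Real.summable_pow_div_factorial (K * |u|)).mul_left K)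
  rw [_root_.abs_mul, _root_.abs_pow]
  calc |c m| * |u| ^ m ≤ K ^ (m+1) / m.factorial * |u| ^ m := by
        exact mul_le_mul_of_nonneg_right (hK m) (pow_nonneg (abs_nonneg _) m)
    _ = K * ((K * |u|) ^ m / m.factorial) := by rw [mul_pow]; ring

theorem Good.summable {c : ℕ → ℝ} (hc : Good c) (u : ℝ) :
    Summable fun m => c m * u ^ m :=
  (hc.summable_norm u).of_abs

theorem Good.D {c : ℕ → ℝ} (hc : Good c) : Good (Dc c) := by
  obtain ⟨K, hK1, hK⟩ := hc
  have hKpos : (0:ℝ) < K := lt_of_lt_of_le one_pos hK1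
  refine ⟨K ^ 2, one_le_pow₀ hK1, fun m => ?_⟩
  have h1 : |Dc c m| = ((m:ℝ)+1) * |c (m+1)| := by
    rw [Dc, _root_.abs_mul, _root_.abs_of_nonneg (by positivity)]
  rw [h1]
  have h2 : ((m:ℝ)+1) * |c (m+1)| ≤ ((m:ℝ)+1) * (K ^ (m+2) / (m+1).factorial) :=
    mul_le_mul_of_nonneg_left (hK (m+1)) (by positivity)
  have h3 : ((m:ℝ)+1) * (K ^ (m+2) / (m+1).factorial) = K ^ (m+2) / m.factorial := by
    rw [Nat.factorial_succ]
    push_cast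
    have : ((m:ℝ)+1) ≠ 0 := by positivity
    field_simp
  have h4 : K ^ (m+2) ≤ (K ^ 2) ^ (m+1) := by
    rw [← pow_mul]
    exact pow_le_pow_right₀ hK1 (by omega)
  calc ((m:ℝ)+1) * |c (m+1)| ≤ K ^ (m+2) / m.factorial := h2.trans_eq h3
    _ ≤ (K^2) ^ (m+1) / m.factorial := by gcongr

theorem Good.linear {c : ℕ → ℝ} (hc : Good c) (a b : ℝ) :
    Good (fun m => (a * m + b) * c m) := by
  obtain ⟨K, hK1, hK⟩ := hc
  set C : ℝ := |a| + |b| + 1 with hC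
  have hC1 : (1:ℝ) ≤ C := by nlinarith [abs_nonneg a, abs_nonneg b]
  refine ⟨C * (2 * K), by nlinarith, fun m => ?_⟩
  have hm2 : ((m:ℝ) + 1) ≤ 2 ^ m := by
    have := Nat.lt_two_pow_self (n := m)
    exact_mod_cast Nat.succ_le_of_lt this
  have h1 : |a * m + b| ≤ C * 2 ^ m := by
    have : |a * m + b| ≤ |a| * m + |b| := by
      calc |a * m + b| ≤ |a * m| + |b| := abs_add_le _ _
        _ = |a| * m + |b| := by rw [_root_.abs_mul, Nat.abs_cast]
    have h2 : |a| * m + |b| ≤ C * (m + 1) := by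
      have hm0 : (0:ℝ) ≤ m := Nat.cast_nonneg m
      nlinarith [abs_nonneg a, abs_nonneg b]
    calc |a * m + b| ≤ C * ((m:ℝ)+1) := this.trans h2
      _ ≤ C * 2 ^ m := by nlinarith
  rw [abs_mul]
  calc |a * ↑m + b| * |c m| ≤ (C * 2 ^ m) * (K ^ (m+1) / m.factorial) := by
        exact mul_le_mul h1 (hK m) (abs_nonneg _) (by positivity)
    _ ≤ (C * (2 * K)) ^ (m+1) / m.factorial := by
        rw [← mul_div_assoc]
        gcongr
        calc C * 2 ^ m * K ^ (m+1) ≤ C ^ (m+1) * 2 ^ (m+1) * K ^ (m+1) := by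
              have : C ≤ C ^ (m+1) := le_self_pow₀ hC1 (by omega)
              have h2 : (2:ℝ) ^ m ≤ 2 ^ (m+1) := by
                exact pow_le_pow_right₀ one_le_two (by omega)
              have hstep : C * 2 ^ m ≤ C ^ (m+1) * 2 ^ (m+1) :=
                mul_le_mul this h2 (by positivity) (by positivity)
              exact mul_le_mul hstep le_rfl (by positivity) (by positivity)
          _ = (C * (2 * K)) ^ (m+1) := by rw [mul_pow, mul_pow]; ring

theorem hasDerivAt_E {c : ℕ → ℝ} (hc : Good c) (u : ℝ) :
    HasDerivAt (E c) (E (Dc c) u) u := by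
  have hS := hc.summable
  have key : ∀ y : ℝ, E c y = c 0 + ∑' m, c (m + 1) * y ^ (m + 1) := by
    intro y
    rw [E, (hS y).tsum_eq_zero_add, pow_zero, mul_one]
  have hD : HasDerivAt (fun y : ℝ => ∑' m, c (m + 1) * y ^ (m + 1)) (E (Dc c) u) u := by
    set R : ℝ := |u| + 1 with hR
    have hR0 : (0:ℝ) < R := by positivity
    have hmem : u ∈ Metric.ball (0:ℝ) R := by
      simp only [Metric.mem_ball, Real.dist_eq, sub_zero, hR]
      linarith [abs_nonneg u]
    refine hasDerivAt_tsum_of_isPreconnected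
      (u := fun m => |Dc c m * R ^ m|) ((hc.D).summable_norm R) Metric.isOpen_ball
      ((convex_ball (0:ℝ) R).isPreconnected)
      (g := fun m y => c (m + 1) * y ^ (m + 1)) (g' := fun m y => Dc c m * y ^ m)
      ?_ ?_ (Metric.mem_ball_self hR0) ?_ hmem
    · intro m y _
      have h := (hasDerivAt_pow (m+1) y).const_mul (c (m+1))
      convert h using 1
      rfl
      simp only [Dc, Nat.add_sub_cancel]
      push_cast
      ring
    · intro m y hy
      have hyR : |y| ≤ R := by
        have h : dist y 0 < R := hy
        rw [Real.dist_eq, sub_zero] at h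
        exact h.le
      show ‖Dc c m * y ^ m‖ ≤ |Dc c m * R ^ m|
      rw [Real.norm_eq_abs, _root_.abs_mul, _root_.abs_mul, _root_.abs_pow, _root_.abs_pow,
        _root_.abs_of_pos hR0]
      exact mul_le_mul_of_nonneg_left (pow_le_pow_left₀ (abs_nonneg _) hyR m) (abs_nonneg _)
    · exact summable_zero.congr fun m => by simp
  exact (hD.const_add (c 0)).congr_of_eventuallyEq (Filter.Eventually.of_forall key)

theorem E_zero (c : ℕ → ℝ) : E c 0 = c 0 := by
  rw [E, tsum_eq_single 0]
  · simp
  · intro m hm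
    simp [zero_pow hm]

theorem E_const_mul (a : ℝ) (c : ℕ → ℝ) (u : ℝ) :
    E (fun m => a * c m) u = a * E c u := by
  rw [E, E, ← tsum_mul_left]
  refine tsum_congr fun (m : ℕ) => ?_
  show a * c m * u ^ m = a * (c m * u ^ m)
  ring

theorem E_linshift {c : ℕ → ℝ} (hc : Good c) (u : ℝ) :
    E (fun m => 2 * (m:ℝ) * c m) u = 2 * u * E (Dc c) u := by
  have hsum : Summable fun m : ℕ => 2 * (m:ℝ) * c m * u ^ m := by
    have h2 := (hc.linear 2 0).summable u
    simpa using h2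
  rw [E, hsum.tsum_eq_zero_add]
  simp only [Nat.cast_zero, mul_zero, zero_mul, zero_add, Nat.cast_add, Nat.cast_one]
  rw [E, ← tsum_mul_left]
  exact tsum_congr fun m => by simp only [Dc]; rw [pow_succ]; ring

def cJ : ℕ → ℕ → ℝ
  | 0 => fun m => (-1 : ℝ) ^ m / (2 * m + 1).factorial
  | n + 1 => fun m => 2 * Dc (cJ n) m

def cY : ℕ → ℕ → ℝ
  | 0 => fun m => (-1 : ℝ) ^ m / (2 * m).factorial
  | n + 1 => fun m => (2 * (m : ℝ) - (2 * n + 1)) * cY n m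

theorem Good.const_mul {c : ℕ → ℝ} (hc : Good c) (a : ℝ) : Good (fun m => a * c m) := by
  have h := hc.linear 0 a
  have he : (fun m : ℕ => (0 * (m:ℝ) + a) * c m) = fun m : ℕ => a * c m := by
    funext m; ring
  rwa [he] at h

theorem good_cJ (n : ℕ) : Good (cJ n) := by
  induction n with
  | zero =>
    refine ⟨1, le_refl _, fun m => ?_⟩
    have h : (m.factorial : ℝ) ≤ ((2 * m + 1).factorial : ℝ) := by
      exact_mod_cast Nat.factorial_le (by omega)
    have : |cJ 0 m| = 1 / ((2 * m + 1).factorial : ℝ) := by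
      simp [cJ, _root_.abs_div, _root_.abs_pow]
    rw [this, one_pow]
    exact one_div_le_one_div_of_le (by positivity) h
  | succ n ih =>
    have h := (ih.D).const_mul 2
    exact h

theorem good_cY (n : ℕ) : Good (cY n) := by
  induction n with
  | zero =>
    refine ⟨1, le_refl _, fun m => ?_⟩
    have h : (m.factorial : ℝ) ≤ ((2 * m).factorial : ℝ) := by
      exact_mod_cast Nat.factorial_le (by omega)
    have : |cY 0 m| = 1 / ((2 * m).factorial : ℝ) := by
      simp [cY, _root_.abs_div, _root_.abs_pow]
    rw [this, one_pow]
    exact one_div_le_one_div_of_le (by positivity) h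
  | succ n ih =>
    have h := ih.linear 2 (-(2 * (n:ℝ) + 1))
    have he : (fun m : ℕ => (2 * (m:ℝ) + -(2 * (n:ℝ) + 1)) * cY n m)
        = fun m : ℕ => (2 * (m:ℝ) - (2 * (n:ℝ) + 1)) * cY n m := by
      funext m; ring
    rw [he] at h
    exact h

theorem cY_zero (n : ℕ) : cY n 0 = (-1) ^ n * ∏ j ∈ Finset.range n, (2 * (j:ℝ) + 1) := by
  induction n with
  | zero => simp [cY]
  | succ n ih =>
    show (2 * ((0:ℕ):ℝ) - (2 * n + 1)) * cY n 0 = _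
    rw [ih, Finset.prod_range_succ]
    push_cast
    ring

theorem cJ_formula (n : ℕ) : ∀ m : ℕ, cJ n m =
    (-1:ℝ) ^ (n + m) * 2 ^ n * (∏ j ∈ Finset.range n, ((m:ℝ) + 1 + j))
      / ((2 * (m + n) + 1).factorial : ℝ) := by
  induction n with
  | zero => intro m; simp [cJ]
  | succ n ih =>
    intro m
    show 2 * (((m:ℝ) + 1) * cJ n (m + 1)) = _
    rw [ih (m + 1)]
    rw [Finset.prod_range_succ']
    rw [show (n + 1) + m = n + (m + 1) from by ring]
    rw [show 2 * (m + (n + 1)) + 1 = 2 * ((m + 1) + n) + 1 from by ring]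
    have hp : (∏ j ∈ Finset.range n, ((m:ℝ) + 1 + ((j:ℕ) + 1 : ℕ)))
        = ∏ j ∈ Finset.range n, (((m + 1 : ℕ):ℝ) + 1 + j) := by
      refine Finset.prod_congr rfl fun j _ => ?_
      push_cast; ring
    rw [hp]
    have hne : (((2 * ((m + 1) + n) + 1).factorial : ℕ) : ℝ) ≠ 0 := by positivity
    push_cast
    field_simp
    ring

theorem prod_cast_factorial (n : ℕ) :
    (∏ j ∈ Finset.range n, ((j:ℝ) + 1)) = n.factorial := by
  induction n with
  | zero => simp
  | succ n ih =>
    rw [Finset.prod_range_succ, ih, Nat.factorial_succ]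
    push_cast; ring

theorem keyId (n : ℕ) :
    2 ^ n * (n.factorial : ℝ) * ∏ j ∈ Finset.range n, (2 * (j:ℝ) + 1)
      = ((2 * n).factorial : ℝ) := by
  induction n with
  | zero => simp
  | succ n ih =>
    rw [Finset.prod_range_succ, Nat.factorial_succ,
      show 2 * (n + 1) = (2 * n + 1) + 1 from by ring, Nat.factorial_succ, Nat.factorial_succ]
    push_cast
    push_cast at ih
    linear_combination (2 * ((n:ℝ) + 1)) * (2 * (n:ℝ) + 1) * ih

theorem cJ_zero (n : ℕ) :
    cJ n 0 = (-1:ℝ) ^ n * 2 ^ n * (n.factorial : ℝ) / ((2 * n + 1).factorial : ℝ) := by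
  rw [cJ_formula n 0]
  have hp : (∏ j ∈ Finset.range n, (((0:ℕ):ℝ) + 1 + j)) = ∏ j ∈ Finset.range n, ((j:ℝ) + 1) := by
    refine Finset.prod_congr rfl fun j _ => by push_cast; ring
  rw [hp, prod_cast_factorial]
  norm_num

theorem repJ (n : ℕ) : ∀ x : ℝ, x ≠ 0 →
    (sphStep^[n] (fun t => Real.sin t / t)) x = E (cJ n) (x ^ 2) := by
  induction n with
  | zero =>
    intro x hx
    simp only [Function.iterate_zero, id_eq]
    have h := (Real.hasSum_sin x).div_const x
    have he : (fun m : ℕ => (-1:ℝ) ^ m * x ^ (2 * m + 1) / ((2 * m + 1).factorial : ℝ) / x)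
        = fun m : ℕ => cJ 0 m * (x ^ 2) ^ m := by
      funext m
      show _ = (-1:ℝ) ^ m / ((2 * m + 1).factorial : ℝ) * (x ^ 2) ^ m
      rw [← pow_mul]
      have : ((2 * m + 1).factorial : ℝ) ≠ 0 := by positivity
      field_simp
      ring
    rw [he] at h
    rw [E]
    exact h.tsum_eq.symm
  | succ n ih =>
    intro x hx
    rw [Function.iterate_succ_apply']
    show deriv (sphStep^[n] fun t => Real.sin t / t) x / x = _
    have hEv : (sphStep^[n] fun t => Real.sin t / t) =ᶠ[𝓝 x] fun y => E (cJ n) (y ^ 2) := by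
      filter_upwards [compl_singleton_mem_nhds hx] with y hy
      exact ih y hy
    have hG : HasDerivAt (fun y : ℝ => E (cJ n) (y ^ 2)) (E (Dc (cJ n)) (x ^ 2) * (2 * x)) x := by
      convert (hasDerivAt_E (good_cJ n) (x ^ 2)).comp x (hasDerivAt_pow 2 x) using 1; rfl; rfl; rfl; simp
    have hg := hG.congr_of_eventuallyEq hEv
    rw [hg.deriv]
    have hE2 : E (cJ (n + 1)) (x ^ 2) = 2 * E (Dc (cJ n)) (x ^ 2) :=
      E_const_mul 2 (Dc (cJ n)) (x ^ 2)
    rw [hE2]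
    field_simp

theorem E_cY_succ (n : ℕ) (u : ℝ) :
    E (cY (n + 1)) u = 2 * u * E (Dc (cY n)) u - (2 * (n:ℝ) + 1) * E (cY n) u := by
  have h1 : Summable fun m : ℕ => 2 * (m:ℝ) * cY n m * u ^ m := by
    simpa using ((good_cY n).linear 2 0).summable u
  have h2 : Summable fun m : ℕ => (2 * (n:ℝ) + 1) * (cY n m * u ^ m) :=
    ((good_cY n).summable u).mul_left _
  have e1 : E (cY (n + 1)) u
      = ∑' m : ℕ, (2 * (m:ℝ) * cY n m * u ^ m - (2 * (n:ℝ) + 1) * (cY n m * u ^ m)) := by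
    rw [E]
    refine tsum_congr fun m => ?_
    show (2 * (m:ℝ) - (2 * (n:ℝ) + 1)) * cY n m * u ^ m = _
    ring
  rw [e1, h1.tsum_sub h2, tsum_mul_left, ← E_linshift (good_cY n) u]
  rfl

theorem repY (n : ℕ) : ∀ x : ℝ, x ≠ 0 →
    (sphStep^[n] (fun t => Real.cos t / t)) x = E (cY n) (x ^ 2) / x ^ (2 * n + 1) := by
  induction n with
  | zero =>
    intro x hx
    simp only [Function.iterate_zero, id_eq]
    have h := Real.hasSum_cos x
    have he : (fun m : ℕ => (-1:ℝ) ^ m * x ^ (2 * m) / ((2 * m).factorial : ℝ))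
        = fun m : ℕ => cY 0 m * (x ^ 2) ^ m := by
      funext m
      show _ = (-1:ℝ) ^ m / ((2 * m).factorial : ℝ) * (x ^ 2) ^ m
      rw [← pow_mul]
      ring
    rw [he] at h
    rw [show 2 * 0 + 1 = 1 from rfl, pow_one, E, h.tsum_eq]
  | succ n ih =>
    intro x hx
    rw [Function.iterate_succ_apply']
    show deriv (sphStep^[n] fun t => Real.cos t / t) x / x = _
    have hEv : (sphStep^[n] fun t => Real.cos t / t) =ᶠ[𝓝 x]
        fun y => E (cY n) (y ^ 2) / y ^ (2 * n + 1) := by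
      filter_upwards [compl_singleton_mem_nhds hx] with y hy
      exact ih y hy
    have hnum : HasDerivAt (fun y : ℝ => E (cY n) (y ^ 2)) (E (Dc (cY n)) (x ^ 2) * (2 * x)) x := by
      convert (hasDerivAt_E (good_cY n) (x ^ 2)).comp x (hasDerivAt_pow 2 x) using 1; rfl; rfl; rfl; simp
    have hG := hnum.div (hasDerivAt_pow (2 * n + 1) x) (pow_ne_zero _ hx)
    have hg := hG.congr_of_eventuallyEq hEv
    rw [hg.deriv]
    simp only [Nat.add_sub_cancel]
    rw [E_cY_succ n (x ^ 2)]
    have h1 : x ^ (2 * n + 1) ≠ 0 := pow_ne_zero _ hx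
    have h2 : x ^ (2 * (n + 1) + 1) ≠ 0 := pow_ne_zero _ hx
    field_simp
    push_cast
    ring

/-- derivative of `sphj` -/
def jd (n : ℕ) (x : ℝ) : ℝ :=
  (-1:ℝ) ^ n * ((n:ℝ) * x ^ (n - 1)) * E (cJ n) (x ^ 2)
    + (-1:ℝ) ^ n * x ^ n * (E (Dc (cJ n)) (x ^ 2) * (2 * x))

/-- derivative of `sphy` -/
def yd (n : ℕ) (x : ℝ) : ℝ :=
  -(-1:ℝ) ^ n * ((E (Dc (cY n)) (x ^ 2) * (2 * x) * x ^ (n + 1)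
      - E (cY n) (x ^ 2) * (((n:ℝ) + 1) * x ^ n)) / (x ^ (n + 1)) ^ 2)

theorem hasDerivAt_sphj (n : ℕ) {x : ℝ} (hx : x ≠ 0) :
    HasDerivAt (sphj n) (jd n x) x := by
  have hEv : sphj n =ᶠ[𝓝 x] fun y => (-1:ℝ) ^ n * y ^ n * E (cJ n) (y ^ 2) := by
    filter_upwards [compl_singleton_mem_nhds hx] with y hy
    rw [sphj, repJ n y hy, neg_pow]
  have h1 : HasDerivAt (fun y : ℝ => (-1:ℝ) ^ n * y ^ n)
      ((-1:ℝ) ^ n * ((n:ℝ) * x ^ (n - 1))) x := (hasDerivAt_pow n x).const_mul _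
  have h2 : HasDerivAt (fun y : ℝ => E (cJ n) (y ^ 2))
      (E (Dc (cJ n)) (x ^ 2) * (2 * x)) x := by
    convert (hasDerivAt_E (good_cJ n) (x ^ 2)).comp x (hasDerivAt_pow 2 x) using 1; rfl; rfl; rfl; simp
  have h3 := h1.mul h2
  refine (h3.congr_of_eventuallyEq hEv).congr_deriv ?_
  rw [jd]

theorem hasDerivAt_sphy (n : ℕ) {x : ℝ} (hx : x ≠ 0) :
    HasDerivAt (sphy n) (yd n x) x := by
  have hEv : sphy n =ᶠ[𝓝 x]
      fun y => -(-1:ℝ) ^ n * (E (cY n) (y ^ 2) / y ^ (n + 1)) := by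
    filter_upwards [compl_singleton_mem_nhds hx] with y hy
    rw [sphy, repY n y hy, neg_pow, show 2 * n + 1 = n + (n + 1) from by ring, pow_add]
    have h1 : (y:ℝ) ^ n ≠ 0 := pow_ne_zero _ hy
    have h2 : (y:ℝ) ^ (n + 1) ≠ 0 := pow_ne_zero _ hy
    field_simp
  have hnum : HasDerivAt (fun y : ℝ => E (cY n) (y ^ 2))
      (E (Dc (cY n)) (x ^ 2) * (2 * x)) x := by
    convert (hasDerivAt_E (good_cY n) (x ^ 2)).comp x (hasDerivAt_pow 2 x) using 1; rfl; rfl; rfl; simp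
  have hG := (hnum.div (hasDerivAt_pow (n + 1) x) (pow_ne_zero _ hx)).const_mul (-(-1:ℝ) ^ n)
  refine (hG.congr_of_eventuallyEq hEv).congr_deriv ?_
  rw [yd]
  simp only [Nat.add_sub_cancel]
  push_cast
  ring

theorem sphh'_eq (n : ℕ) {x : ℝ} (hx : x ≠ 0) :
    sphh' n x = (jd n x : ℂ) + Complex.I * (yd n x : ℂ) := by
  have hj := (hasDerivAt_sphj n hx).ofReal_comp
  have hy := (hasDerivAt_sphy n hx).ofReal_comp
  have h := hj.add (hy.const_mul Complex.I)
  exact h.deriv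

def Rj (n : ℕ) (k : ℝ) : ℝ :=
  (n:ℝ) * k ^ (2 * n + 1) * (E (cJ n) (k ^ 2)) ^ 2
    + 2 * k ^ (2 * n + 3) * (E (Dc (cJ n)) (k ^ 2) * E (cJ n) (k ^ 2))

def Ry (n : ℕ) (k : ℝ) : ℝ :=
  ((n:ℝ) + 1) * (E (cY n) (k ^ 2) * E (cJ n) (k ^ 2))
    - 2 * k ^ 2 * (E (Dc (cY n)) (k ^ 2) * E (cJ n) (k ^ 2))

theorem hjj (n : ℕ) {k : ℝ} (hk : 0 < k) :
    k ^ 2 * jd n k * sphj n k = Rj n k := by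
  rw [sphj, repJ n k hk.ne', neg_pow, jd, Rj]
  rcases neg_one_pow_eq_or ℝ n with h | h <;> rw [h] <;>
    · cases n with
      | zero => norm_num; ring
      | succ m =>
        simp only [Nat.add_sub_cancel]
        push_cast
        ring

theorem hyj (n : ℕ) {k : ℝ} (hk : 0 < k) :
    k ^ 2 * yd n k * sphj n k = Ry n k := by
  have hkne : k ≠ 0 := hk.ne'
  have h1 : k ^ (n + 1) ≠ 0 := pow_ne_zero _ hkne
  rw [sphj, repJ n k hkne, neg_pow, yd, Ry]
  rcases neg_one_pow_eq_or ℝ n with h | h <;> rw [h] <;>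
    · field_simp
      ring

theorem main_eventual (n : ℕ) {k : ℝ} (hk : 0 < k) :
    (1 : ℂ) + Complex.I * (k : ℂ) ^ 2 * sphh' n k * (sphj n k : ℂ)
      = (1 : ℂ) - (Ry n k : ℂ) + (Rj n k : ℂ) * Complex.I := by
  rw [sphh'_eq n hk.ne']
  have h1c : (k:ℂ) ^ 2 * (jd n k : ℂ) * (sphj n k : ℂ) = (Rj n k : ℂ) := by
    have h := congrArg (fun t : ℝ => (t : ℂ)) (hjj n hk)
    push_cast at h
    exact h
  have h2c : (k:ℂ) ^ 2 * (yd n k : ℂ) * (sphj n k : ℂ) = (Ry n k : ℂ) := by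
    have h := congrArg (fun t : ℝ => (t : ℂ)) (hyj n hk)
    push_cast at h
    exact h
  linear_combination Complex.I * h1c - h2c
    + ((k:ℂ) ^ 2 * (yd n k : ℂ) * (sphj n k : ℂ)) * Complex.I_sq

theorem value_eq (n : ℕ) :
    ((n:ℝ) + 1) * (cY n 0 * cJ n 0) = ((n:ℝ) + 1) / (2 * (n:ℝ) + 1) := by
  rw [cY_zero, cJ_zero]
  have hfac : ((2 * n + 1).factorial : ℝ) = (2 * (n:ℝ) + 1) * ((2 * n).factorial : ℝ) := by
    rw [Nat.factorial_succ]
    push_cast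
    ring
  rw [hfac]
  have key := keyId n
  have hne1 : ((2 * n).factorial : ℝ) ≠ 0 := by positivity
  have hne2 : (2 * (n:ℝ) + 1) ≠ 0 := by positivity
  rcases neg_one_pow_eq_or ℝ n with h | h <;> rw [h] <;>
    · field_simp
      linear_combination key

end SphAux

open SphAux in
/-- The eigenvalue of 1/2 + H′, namely 1 + i·k²·h_n′(k)·j_n(k), tends to n/(2n+1)
as k → 0⁺. -/
theorem halfPlusHprime_eigenvalue_limit (n : ℕ) :
    Filter.Tendsto
      (fun k : ℝ => (1 : ℂ) + Complex.I * (k : ℂ) ^ 2 * sphh' n k * (sphj n k : ℂ))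
      (𝓝[>] (0 : ℝ)) (𝓝 ((n : ℂ) / (2 * (n : ℂ) + 1))) := by
  have hk2 : Tendsto (fun k : ℝ => k ^ 2) (𝓝[>] (0:ℝ)) (𝓝 0) := by
    have h := ((continuous_pow 2).tendsto (0:ℝ)).mono_left
      (nhdsWithin_le_nhds (s := Set.Ioi (0:ℝ)))
    simpa using h
  have hEc : ∀ c : ℕ → ℝ, Good c →
      Tendsto (fun k : ℝ => E c (k ^ 2)) (𝓝[>] (0:ℝ)) (𝓝 (c 0)) := by
    intro c hc
    have h := (hasDerivAt_E hc 0).continuousAt.tendsto.comp hk2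
    rwa [E_zero] at h
  have hpow : ∀ j : ℕ, 1 ≤ j → Tendsto (fun k : ℝ => k ^ j) (𝓝[>] (0:ℝ)) (𝓝 0) := by
    intro j hj
    have h := ((continuous_pow j).tendsto (0:ℝ)).mono_left
      (nhdsWithin_le_nhds (s := Set.Ioi (0:ℝ)))
    rwa [zero_pow (by omega)] at h
  have hRj : Tendsto (fun k => Rj n k) (𝓝[>] (0:ℝ)) (𝓝 0) := by
    have h := (((tendsto_const_nhds (α := ℝ) (x := (n:ℝ))).mul
        (hpow (2*n+1) (by omega))).mul ((hEc _ (good_cJ n)).pow 2)).add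
      (((tendsto_const_nhds (α := ℝ) (x := (2:ℝ))).mul (hpow (2*n+3) (by omega))).mul
        ((hEc _ ((good_cJ n).D)).mul (hEc _ (good_cJ n))))
    simpa [Rj] using h
  have hRy : Tendsto (fun k => Ry n k) (𝓝[>] (0:ℝ))
      (𝓝 (((n:ℝ)+1) * (cY n 0 * cJ n 0))) := by
    have h := ((tendsto_const_nhds (α := ℝ) (x := ((n:ℝ)+1))).mul
        ((hEc _ (good_cY n)).mul (hEc _ (good_cJ n)))).sub
      (((tendsto_const_nhds (α := ℝ) (x := (2:ℝ))).mul hk2).mul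
        ((hEc _ ((good_cY n).D)).mul (hEc _ (good_cJ n))))
    simpa [Ry] using h
  have hΦ : Tendsto (fun k : ℝ => (1:ℂ) - (Ry n k : ℂ) + (Rj n k : ℂ) * Complex.I)
      (𝓝[>] (0:ℝ))
      (𝓝 ((1:ℂ) - ((((n:ℝ)+1) * (cY n 0 * cJ n 0) : ℝ) : ℂ) + ((0:ℝ):ℂ) * Complex.I)) := by
    refine (Filter.Tendsto.sub tendsto_const_nhds ?_).add (Filter.Tendsto.mul ?_ tendsto_const_nhds)
    · exact (Complex.continuous_ofReal.tendsto _).comp hRy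
    · exact (Complex.continuous_ofReal.tendsto _).comp hRj
  have hval : (1:ℂ) - ((((n:ℝ)+1) * (cY n 0 * cJ n 0) : ℝ) : ℂ) + ((0:ℝ):ℂ) * Complex.I
      = (n:ℂ) / (2*(n:ℂ)+1) := by
    have hne' : (2*(n:ℂ)+1) ≠ 0 := by
      have h2 : (2*(n:ℂ)+1) = ((2*(n:ℝ)+1 : ℝ):ℂ) := by push_cast; ring
      rw [h2]
      exact Complex.ofReal_ne_zero.mpr (by positivity)
    rw [value_eq]
    push_cast
    field_simp [hne']
    have hne'' : (n:ℂ) * 2 + 1 ≠ 0 := by rw [mul_comm]; exact hne'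
    field_simp [hne'']
    ring
  have hev : (fun k : ℝ => (1:ℂ) - (Ry n k : ℂ) + (Rj n k : ℂ) * Complex.I)
      =ᶠ[𝓝[>] (0:ℝ)]
      fun k : ℝ => (1 : ℂ) + Complex.I * (k : ℂ) ^ 2 * sphh' n k * (sphj n k : ℂ) := by
    filter_upwards [self_mem_nhdsWithin] with k hk
    exact (main_eventual n hk).symm
  have hfin := Filter.Tendsto.congr' hev hΦ
  rwa [hval] at hfin

end
end

section
/- For every natural number n and every real k ≠ 0, the Wronskian identity j_n(k)·y_n′(k) − j_n′(k)·y_n(k) = 1/k² holds. -/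
open Real Complex Filter Topology

open Polynomial

/-- Pairs of polynomials `(Aₙ, Bₙ)` with
`(x⁻¹ d/dx)^n (sin t/t) = Aₙ(1/x) sin x + Bₙ(1/x) cos x`. -/
noncomputable def sphAB : ℕ → Polynomial ℝ × Polynomial ℝ
  | 0 => (X, 0)
  | n+1 => (X * (-(X^2) * (sphAB n).1.derivative - (sphAB n).2),
            X * ((sphAB n).1 - X^2 * (sphAB n).2.derivative))

/-- Polynomial form of the spherical Bessel differential equation. -/
lemma sphODE (n : ℕ) :
    X^4 * (sphAB n).1.derivative.derivative
      = (2*n : ℝ[X]) * X^3 * (sphAB n).1.derivative - 2*X^2*(sphAB n).2.derivative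
        + (2*n+2 : ℝ[X]) * X * (sphAB n).2
  ∧ X^4 * (sphAB n).2.derivative.derivative
      = 2*X^2*(sphAB n).1.derivative + (2*n : ℝ[X])*X^3*(sphAB n).2.derivative
        - (2*n+2 : ℝ[X])*X*(sphAB n).1 := by
  induction n with
  | zero =>
    constructor <;> · simp [sphAB]; try ring
  | succ n ih =>
    obtain ⟨ha, hb⟩ := ih
    have ha' := congrArg derivative ha
    have hb' := congrArg derivative hb
    simp only [derivative_mul, derivative_pow, derivative_X, derivative_add, derivative_sub,
      derivative_ofNat, derivative_natCast, derivative_one, derivative_neg, derivative_C,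
      Polynomial.C_eq_natCast, Nat.cast_ofNat, map_ofNat, C_1, mul_one, mul_zero, zero_mul,
      add_zero, zero_add, pow_one] at ha' hb'
    constructor
    · show X^4 * (X * (-(X^2) * (sphAB n).1.derivative - (sphAB n).2)).derivative.derivative = _
      simp only [sphAB, derivative_mul, derivative_pow, derivative_X, derivative_add,
        derivative_sub, derivative_neg, derivative_one, derivative_ofNat, derivative_natCast,
        derivative_C, Polynomial.C_eq_natCast, Nat.cast_ofNat, map_ofNat, C_1, mul_one,
        mul_zero, zero_mul, add_zero, zero_add, pow_one]
      push_cast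
      linear_combination (-(X^3 : ℝ[X])) * ha' - X * hb
    · show X^4 * (X * ((sphAB n).1 - X^2 * (sphAB n).2.derivative)).derivative.derivative = _
      simp only [sphAB, derivative_mul, derivative_pow, derivative_X, derivative_add,
        derivative_sub, derivative_neg, derivative_one, derivative_ofNat, derivative_natCast,
        derivative_C, Polynomial.C_eq_natCast, Nat.cast_ofNat, map_ofNat, C_1, mul_one,
        mul_zero, zero_mul, add_zero, zero_add, pow_one]
      push_cast
      linear_combination (-(X^3 : ℝ[X])) * hb' + X * ha

/-- Polynomial form of the Wronskian identity. -/
lemma sphT (n : ℕ) :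
    (sphAB n).1^2 + (sphAB n).2^2
      - X^2 * ((sphAB n).1 * (sphAB n).2.derivative - (sphAB n).1.derivative * (sphAB n).2)
      = X^(2*n+2) := by
  induction n with
  | zero => simp [sphAB]
  | succ n ih =>
    obtain ⟨ha, hb⟩ := sphODE n
    show (X * (-(X^2) * (sphAB n).1.derivative - (sphAB n).2))^2
        + (X * ((sphAB n).1 - X^2 * (sphAB n).2.derivative))^2
        - X^2 * ((X * (-(X^2) * (sphAB n).1.derivative - (sphAB n).2))
            * (X * ((sphAB n).1 - X^2 * (sphAB n).2.derivative)).derivative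
          - (X * (-(X^2) * (sphAB n).1.derivative - (sphAB n).2)).derivative
            * (X * ((sphAB n).1 - X^2 * (sphAB n).2.derivative))) = X^(2*(n+1)+2)
    simp only [derivative_mul, derivative_pow, derivative_X, derivative_add,
      derivative_sub, derivative_neg, derivative_one, derivative_ofNat, derivative_natCast,
      derivative_C, Polynomial.C_eq_natCast, Nat.cast_ofNat, map_ofNat, C_1, mul_one,
      mul_zero, zero_mul, add_zero, zero_add, pow_one]
    have hpow : (X : ℝ[X])^(2*(n+1)+2) = X^2 * X^(2*n+2) := by ring
    rw [hpow, ← ih]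
    linear_combination (X^4*(sphAB n).2.derivative - X^2*(sphAB n).1) * ha
      + (-(X^2)*(sphAB n).2 - X^4*(sphAB n).1.derivative) * hb

/-- `eP P Q x = P(1/x) sin x + Q(1/x) cos x`. -/
noncomputable def eP (P Q : Polynomial ℝ) (x : ℝ) : ℝ :=
  P.eval x⁻¹ * Real.sin x + Q.eval x⁻¹ * Real.cos x

lemma hasDerivAt_eP (P Q : Polynomial ℝ) {x : ℝ} (hx : x ≠ 0) :
    HasDerivAt (eP P Q) (eP (-(X^2) * P.derivative - Q) (P - X^2 * Q.derivative) x) x := by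
  have hP : HasDerivAt (fun y : ℝ => P.eval y⁻¹) (P.derivative.eval x⁻¹ * (-(x^2)⁻¹)) x :=
    (P.hasDerivAt x⁻¹).comp x (hasDerivAt_inv hx)
  have hQ : HasDerivAt (fun y : ℝ => Q.eval y⁻¹) (Q.derivative.eval x⁻¹ * (-(x^2)⁻¹)) x :=
    (Q.hasDerivAt x⁻¹).comp x (hasDerivAt_inv hx)
  have h := (hP.mul (Real.hasDerivAt_sin x)).add (hQ.mul (Real.hasDerivAt_cos x))
  refine h.congr_deriv ?_
  simp only [eP, eval_sub, eval_mul, eval_neg, eval_pow, eval_X]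
  field_simp
  ring

lemma sphStep_eP (P Q : Polynomial ℝ) (F : ℝ → ℝ) (hF : ∀ y, y ≠ 0 → F y = eP P Q y)
    {x : ℝ} (hx : x ≠ 0) :
    sphStep F x = eP (X * (-(X^2) * P.derivative - Q)) (X * (P - X^2 * Q.derivative)) x := by
  have hev : F =ᶠ[𝓝 x] eP P Q := by
    filter_upwards [eventually_ne_nhds hx] with y hy using hF y hy
  have hd : HasDerivAt F (eP (-(X^2) * P.derivative - Q) (P - X^2 * Q.derivative) x) x :=
    (hasDerivAt_eP P Q hx).congr_of_eventuallyEq hev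
  show deriv F x / x = _
  rw [hd.deriv]
  simp only [eP, eval_mul, eval_X]
  rw [div_eq_inv_mul]
  ring

lemma closed_sin (n : ℕ) : ∀ x : ℝ, x ≠ 0 →
    (sphStep^[n] (fun t => Real.sin t / t)) x = eP (sphAB n).1 (sphAB n).2 x := by
  induction n with
  | zero =>
    intro x hx
    simp [eP, sphAB, div_eq_inv_mul]
  | succ n ih =>
    intro x hx
    rw [Function.iterate_succ_apply']
    exact sphStep_eP _ _ _ ih hx

lemma closed_cos (n : ℕ) : ∀ x : ℝ, x ≠ 0 →
    (sphStep^[n] (fun t => Real.cos t / t)) x = eP (-(sphAB n).2) (sphAB n).1 x := by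
  induction n with
  | zero =>
    intro x hx
    simp [eP, sphAB, div_eq_inv_mul]
  | succ n ih =>
    intro x hx
    rw [Function.iterate_succ_apply']
    rw [sphStep_eP _ _ _ ih hx]
    have e1 : X * (-(X^2) * (-(sphAB n).2).derivative - (sphAB n).1)
        = -((sphAB (n+1)).2) := by
      show _ = -(X * ((sphAB n).1 - X^2 * (sphAB n).2.derivative))
      rw [derivative_neg]; ring
    have e2 : X * (-(sphAB n).2 - X^2 * (sphAB n).1.derivative)
        = (sphAB (n+1)).1 := by
      show _ = X * (-(X^2) * (sphAB n).1.derivative - (sphAB n).2)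
      ring
    rw [e1, e2]

/-- Wronskian identity: j_n(k)·y_n′(k) − j_n′(k)·y_n(k) = 1/k². -/
theorem wronskian_jy (n : ℕ) (k : ℝ) (hk : k ≠ 0) :
    sphj n k * sphy' n k - sphj' n k * sphy n k = 1 / k ^ 2 := by
  set A := (sphAB n).1
  set B := (sphAB n).2
  -- derivative of the prefactor (-x)^n
  have hneg : HasDerivAt (fun x : ℝ => (-x)^n) ((n : ℝ) * (-k)^(n-1) * (-1)) k := by
    have := (hasDerivAt_pow n (-k)).comp k (hasDerivAt_neg k)
    simpa [Function.comp_def] using this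
  -- HasDerivAt for sphj n
  have hevj : (fun x : ℝ => (-x)^n * eP A B x) =ᶠ[𝓝 k] sphj n := by
    filter_upwards [eventually_ne_nhds hk] with y hy
    rw [sphj, closed_sin n y hy]
  have hEj := hasDerivAt_eP A B hk
  have hj : HasDerivAt (sphj n)
      (((n : ℝ) * (-k)^(n-1) * (-1)) * eP A B k
        + (-k)^n * eP (-(X^2) * A.derivative - B) (A - X^2 * B.derivative) k) k :=
    (hneg.mul hEj).congr_of_eventuallyEq hevj.symm
  -- HasDerivAt for sphy n
  have hevy : (fun x : ℝ => -((-x)^n * eP (-B) A x)) =ᶠ[𝓝 k] sphy n := by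
    filter_upwards [eventually_ne_nhds hk] with y hy
    rw [sphy, closed_cos n y hy]
  have hEy := hasDerivAt_eP (-B) A hk
  have hy : HasDerivAt (sphy n)
      (-((((n : ℝ) * (-k)^(n-1) * (-1)) * eP (-B) A k
        + (-k)^n * eP (-(X^2) * (-B).derivative - A) (-B - X^2 * A.derivative) k))) k :=
    ((hneg.mul hEy).neg).congr_of_eventuallyEq hevy.symm
  -- values
  have vj : sphj n k = (-k)^n * eP A B k := by rw [sphj, closed_sin n k hk]
  have vy : sphy n k = -((-k)^n * eP (-B) A k) := by rw [sphy, closed_cos n k hk]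
  have vj' : sphj' n k = ((n : ℝ) * (-k)^(n-1) * (-1)) * eP A B k
      + (-k)^n * eP (-(X^2) * A.derivative - B) (A - X^2 * B.derivative) k := hj.deriv
  have vy' : sphy' n k = -((((n : ℝ) * (-k)^(n-1) * (-1)) * eP (-B) A k
      + (-k)^n * eP (-(X^2) * (-B).derivative - A) (-B - X^2 * A.derivative) k)) := hy.deriv
  -- the Wronskian as an algebraic expression
  have hT : A.eval k⁻¹ ^ 2 + B.eval k⁻¹ ^ 2
      - (k⁻¹)^2 * (A.eval k⁻¹ * B.derivative.eval k⁻¹ - A.derivative.eval k⁻¹ * B.eval k⁻¹)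
      = (k⁻¹)^(2*n+2) := by
    have := congrArg (Polynomial.eval k⁻¹) (sphT n)
    simpa [eval_pow] using this
  have hsc : Real.sin k ^ 2 + Real.cos k ^ 2 = 1 := Real.sin_sq_add_cos_sq k
  have hW : sphj n k * sphy' n k - sphj' n k * sphy n k
      = ((-k)^n)^2 * ((A.eval k⁻¹ ^ 2 + B.eval k⁻¹ ^ 2
        - (k⁻¹)^2 * (A.eval k⁻¹ * B.derivative.eval k⁻¹ - A.derivative.eval k⁻¹ * B.eval k⁻¹))
          * (Real.sin k ^ 2 + Real.cos k ^ 2)) := by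
    rw [vj, vy, vj', vy']
    simp only [eP, eval_sub, eval_mul, eval_neg, eval_pow, eval_X, derivative_neg]
    ring
  rw [hW, hT, hsc, mul_one]
  -- power arithmetic
  have h1 : ((-k)^n)^2 = (k^2)^n := by
    rw [← pow_mul, mul_comm n 2, pow_mul, neg_sq]
  rw [h1, inv_pow]
  rw [show 2*n+2 = 2*n + 2 from rfl, pow_add, pow_mul]
  rw [one_div, mul_inv]
  rw [← mul_assoc, mul_inv_cancel₀ (pow_ne_zero n (pow_ne_zero 2 hk)), one_mul]
end

section
/- For every natural number n, the small-argument asymptotic of the spherical Bessel function of the second kind holds: lim_{k→0⁺} k^{n+1}·y_n(k) = −(2n−1)!!. -/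
open Real Complex Filter Topology

noncomputable def AB : ℕ → Polynomial ℝ × Polynomial ℝ
  | 0 => (1, 0)
  | n+1 =>
    ⟨Polynomial.X * (AB n).1.derivative + Polynomial.X * (AB n).2
        - Polynomial.C (2*(n:ℝ)+1) * (AB n).1,
      Polynomial.X * (AB n).2.derivative - Polynomial.X * (AB n).1
        - Polynomial.C (2*(n:ℝ)+1) * (AB n).2⟩

noncomputable def F (n : ℕ) : ℝ → ℝ :=
  fun y => ((AB n).1.eval y * Real.cos y + (AB n).2.eval y * Real.sin y) / y ^ (2*n+1)

lemma key (n : ℕ) : ∀ x : ℝ, x ≠ 0 →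
    (sphStep^[n] (fun t => Real.cos t / t)) x = F n x := by
  induction n with
  | zero =>
    intro x hx
    simp [F, AB]
  | succ n ih =>
    intro x hx
    rw [Function.iterate_succ_apply']
    show deriv (sphStep^[n] (fun t => Real.cos t / t)) x / x = _
    have heq : (sphStep^[n] (fun t => Real.cos t / t)) =ᶠ[nhds x] F n := by
      filter_upwards [isOpen_compl_singleton.mem_nhds hx] with y hy using ih y hy
    rw [heq.deriv_eq]
    have hnum : HasDerivAt (fun y => (AB n).1.eval y * Real.cos y + (AB n).2.eval y * Real.sin y)
        ((AB n).1.derivative.eval x * Real.cos x + (AB n).1.eval x * (-Real.sin x)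
          + ((AB n).2.derivative.eval x * Real.sin x + (AB n).2.eval x * Real.cos x)) x := by
      exact (((AB n).1.hasDerivAt x).mul (Real.hasDerivAt_cos x)).add
        (((AB n).2.hasDerivAt x).mul (Real.hasDerivAt_sin x))
    have hden : HasDerivAt (fun y : ℝ => y ^ (2*n+1)) ((2*n+1 : ℕ) * x ^ (2*n)) x := by
      simpa using hasDerivAt_pow (2*n+1) x
    have hF : HasDerivAt (F n)
        ((((AB n).1.derivative.eval x * Real.cos x + (AB n).1.eval x * (-Real.sin x)
          + ((AB n).2.derivative.eval x * Real.sin x + (AB n).2.eval x * Real.cos x)) * x ^ (2*n+1)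
          - ((AB n).1.eval x * Real.cos x + (AB n).2.eval x * Real.sin x) * ((2*n+1 : ℕ) * x ^ (2*n)))
          / (x ^ (2*n+1)) ^ 2) x := hnum.div hden (pow_ne_zero _ hx)
    rw [hF.deriv]
    simp only [F, AB]
    push_cast
    simp only [Polynomial.eval_add, Polynomial.eval_sub, Polynomial.eval_mul, Polynomial.eval_X,
      Polynomial.eval_C]
    field_simp
    ring
lemma eval_zero (n : ℕ) : (AB n).1.eval 0 = (-1)^n * (Nat.doubleFactorial (2*n-1) : ℝ) := by
  induction n with
  | zero => simp [AB, Nat.doubleFactorial]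
  | succ n ih =>
    have hdf : (Nat.doubleFactorial (2*(n+1)-1) : ℝ)
        = (2*(n:ℝ)+1) * Nat.doubleFactorial (2*n-1) := by
      cases n with
      | zero => norm_num [Nat.doubleFactorial]
      | succ m =>
        have : 2*(m+1+1) - 1 = (2*(m+1)-1) + 2 := by omega
        rw [this, Nat.doubleFactorial_add_two]
        push_cast
        ring_nf
        norm_num
        ring
    simp only [AB, Polynomial.eval_add, Polynomial.eval_sub, Polynomial.eval_mul,
      Polynomial.eval_X, Polynomial.eval_C, zero_mul, ih, hdf]
    ring

/-- Small-argument asymptotic: k^(n+1)·y_n(k) → −(2n−1)!! as k → 0⁺. -/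
theorem sphy_small_argument (n : ℕ) :
    Filter.Tendsto (fun k : ℝ => k ^ (n + 1) * sphy n k)
      (𝓝[>] (0 : ℝ)) (𝓝 (-(Nat.doubleFactorial (2 * n - 1) : ℝ))) := by
  have hcont : Filter.Tendsto
      (fun k : ℝ => -(-1:ℝ)^n * ((AB n).1.eval k * Real.cos k + (AB n).2.eval k * Real.sin k))
      (𝓝[>] (0:ℝ)) (𝓝 (-(Nat.doubleFactorial (2 * n - 1) : ℝ))) := by
    have : Continuous (fun k : ℝ => -(-1:ℝ)^n * ((AB n).1.eval k * Real.cos k + (AB n).2.eval k * Real.sin k)) := by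
      exact continuous_const.mul (((AB n).1.continuous.mul Real.continuous_cos).add ((AB n).2.continuous.mul Real.continuous_sin))
    have h0 : -(-1:ℝ)^n * ((AB n).1.eval 0 * Real.cos 0 + (AB n).2.eval 0 * Real.sin 0)
        = -(Nat.doubleFactorial (2 * n - 1) : ℝ) := by
      rw [eval_zero]
      simp
      rw [← mul_assoc, ← pow_add]
      simp [Even.neg_one_pow ⟨n, rfl⟩]
    exact h0 ▸ (this.tendsto 0).mono_left nhdsWithin_le_nhds
  refine hcont.congr' ?_
  filter_upwards [self_mem_nhdsWithin] with k (hk : 0 < k)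
  have hk' : k ≠ 0 := ne_of_gt hk
  rw [sphy, key n k hk', F]
  field_simp
  ring
end
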